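/- arXiv:2111.10823 — 13 statements merged into one kernel-verified Lean document; each statement's English description precedes it below -/
import Mathlib

section
/- Let (A,≤) be a poset with an antitone involution '. Then the normality condition — L({x,x'}) ≤ U({y,y'}) for all x,y ∈ A — holds if and only if the Zhu condition holds: for all x,y ∈ A, if x ≤ x' and y' ≤ y then x ≤ y. -/
/-- `SetLE B C` means every element of `B` is below every element of `C`. -/
def SetLE {α : Type*} [PartialOrder α] (B C : Set α) : Prop := ∀ x ∈ B, ∀ y ∈ C, x ≤ y

/-- In a poset with an antitone involution, the normality condition
`L({x,x'}) ≤ U({y,y'})` holds for all `x, y` iff the Zhu condition holds. -/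
theorem stmt0 {α : Type*} [PartialOrder α] (f : α → α)
    (hanti : ∀ x y : α, x ≤ y → f y ≤ f x) (hinv : ∀ x : α, f (f x) = x) :
    (∀ x y : α, SetLE (lowerBounds {x, f x}) (upperBounds {y, f y})) ↔
      (∀ x y : α, x ≤ f x → f y ≤ y → x ≤ y) := by
  constructor
  · intro h x y hx hy
    refine h x y x (fun z hz => ?_) y (fun z hz => ?_)
    · rcases hz with h1 | h1 <;> simp_all
    · rcases hz with h1 | h1 <;> simp_all
  · intro h x y a ha b hb
    have ha1 : a ≤ x := ha (Set.mem_insert _ _)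
    have ha2 : a ≤ f x := ha (Set.mem_insert_of_mem _ rfl)
    have hb1 : y ≤ b := hb (Set.mem_insert _ _)
    have hb2 : f y ≤ b := hb (Set.mem_insert_of_mem _ rfl)
    exact h a b (ha2.trans (hanti a x ha1))
      (((hinv y ▸ hanti (f y) b hb2).trans hb1))
end

section
/- Let (A,≤) be a poset and S a nonempty subset of A. Then P_S(A), with the order induced from the twist product and the involution (x,y)' := (y,x), is a pseudo-Kleene poset; concretely, the involution is an antitone involution on (P_S(A),⊑), and for all (a,b),(c,d) ∈ P_S(A), every element of P_S(A) that is a ⊑-lower bound of both (a,b) and (b,a) is ⊑-below every element of P_S(A) that is a ⊑-upper bound of both (c,d) and (d,c). -/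
/-- `PS S` is the set of pairs `(x,y)` with `L({x,y}) ≤ S ≤ U({x,y})`. -/
def PS {α : Type*} [PartialOrder α] (S : Set α) : Set (α × α) :=
  {p | SetLE (lowerBounds {p.1, p.2}) S ∧ SetLE S (upperBounds {p.1, p.2})}

/-- The twist order on `α × α`. -/
def Tle {α : Type*} [PartialOrder α] (p q : α × α) : Prop := p.1 ≤ q.1 ∧ q.2 ≤ p.2

/-- For a poset `(A,≤)` and a nonempty `S ⊆ A`, `P_S(A)` with the twist order and
the involution `(x,y)' = (y,x)` is a pseudo-Kleene poset: the involution maps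
`P_S(A)` into itself, is antitone and involutive, and the normality condition holds. -/
theorem stmt1 {α : Type*} [PartialOrder α] (S : Set α) (hS : S.Nonempty) :
    (∀ p ∈ PS S, (p.2, p.1) ∈ PS S) ∧
    (∀ p ∈ PS S, ∀ q ∈ PS S, Tle p q → Tle (q.2, q.1) (p.2, p.1)) ∧
    (∀ p : α × α, (((p.2, p.1) : α × α).2, ((p.2, p.1) : α × α).1) = p) ∧
    (∀ a b c d : α, (a, b) ∈ PS S → (c, d) ∈ PS S →
      ∀ e ∈ PS S, Tle e (a, b) → Tle e (b, a) →
        ∀ g ∈ PS S, Tle (c, d) g → Tle (d, c) g → Tle e g) := by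
  obtain ⟨s, hs⟩ := hS
  refine ⟨?_, ?_, ?_, ?_⟩
  · rintro ⟨x, y⟩ ⟨h1, h2⟩
    exact ⟨fun a ha => h1 a (by simpa [Set.pair_comm] using ha),
           fun a ha b hb => h2 a ha b (by simpa [Set.pair_comm] using hb)⟩
  · rintro p _ q _ ⟨h1, h2⟩
    exact ⟨h2, h1⟩
  · intro p; rfl
  · rintro a b c d ⟨ha1, ha2⟩ ⟨hc1, hc2⟩ ⟨e1, e2⟩ _ ⟨he1, he2⟩ ⟨he3, he4⟩
      ⟨g1, g2⟩ _ ⟨hg1, hg2⟩ ⟨hg3, hg4⟩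
    have h1 : e1 ≤ s := ha1 e1 (fun z hz => by rcases hz with rfl | hz
                                               · exact he1
                                               · simp_all) s hs
    have h2 : s ≤ g1 := le_trans (hc2 s hs g1 (fun z hz => by
      rcases hz with rfl | hz
      · exact hg1
      · simp_all)) le_rfl
    have h3 : g2 ≤ s := hc1 g2 (fun z hz => by rcases hz with rfl | hz
                                               · exact hg4
                                               · simp_all) s hs
    have h4 : s ≤ e2 := ha2 s hs e2 (fun z hz => by
      rcases hz with rfl | hz
      · exact he4
      · simp_all)
    exact ⟨h1.trans h2, h3.trans h4⟩
end

section
/- Let (A,≤) be a poset and S a nonempty subset of A. If the subposet (S,≤) satisfies the ascending chain condition and the descending chain condition (there is no strictly increasing and no strictly decreasing infinite sequence in S), then P_S(A) = P_{Max S ∪ Min S}(A), where Max S and Min S denote the sets of maximal and minimal elements of S with respect to the induced order. -/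
lemma exists_min_aux {α : Type*} [PartialOrder α] (S : Set α)
    (hdcc : ¬∃ f : ℕ → α, (∀ n, f n ∈ S) ∧ StrictAnti f) :
    ∀ s ∈ S, ∃ m ∈ S, m ≤ s ∧ ∀ t ∈ S, t ≤ m → m = t := by
  have hwf : WellFounded ((· < ·) : S → S → Prop) := by
    rw [RelEmbedding.wellFounded_iff_isEmpty]
    constructor
    rintro ⟨f, hf⟩
    exact hdcc ⟨fun n => (f n).1, fun n => (f n).2, fun a b hab =>
      (hf.mpr hab : (f b : S) < f a)⟩
  intro s hs
  obtain ⟨m, hm, hmin⟩ := hwf.has_min {t : S | (t : α) ≤ s}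
    ⟨⟨s, hs⟩, le_refl s⟩
  refine ⟨m.1, m.2, hm, fun t ht hle => ?_⟩
  rcases eq_or_lt_of_le hle with h | h
  · exact h.symm
  · exact absurd ((hmin ⟨t, ht⟩ (le_trans hle hm)) h) (fun x => x)

lemma exists_max_aux {α : Type*} [PartialOrder α] (S : Set α)
    (hacc : ¬∃ f : ℕ → α, (∀ n, f n ∈ S) ∧ StrictMono f) :
    ∀ s ∈ S, ∃ m ∈ S, s ≤ m ∧ ∀ t ∈ S, m ≤ t → m = t := by
  have := exists_min_aux (α := αᵒᵈ) (OrderDual.ofDual ⁻¹' S) ?_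
  · intro s hs
    obtain ⟨m, hm, h1, h2⟩ := this (OrderDual.toDual s) hs
    exact ⟨OrderDual.ofDual m, hm, h1, fun t ht hle => h2 (OrderDual.toDual t) ht hle⟩
  · rintro ⟨f, hf, hanti⟩
    exact hacc ⟨fun n => OrderDual.ofDual (f n), hf, fun a b hab => hanti hab⟩

/-- If the subposet `(S,≤)` satisfies the ACC and the DCC (no strictly increasing
and no strictly decreasing infinite sequence in `S`), then
`P_S(A) = P_{Max S ∪ Min S}(A)`. -/
theorem stmt3 {α : Type*} [PartialOrder α] (S : Set α) (hS : S.Nonempty)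
    (hacc : ¬∃ f : ℕ → α, (∀ n, f n ∈ S) ∧ StrictMono f)
    (hdcc : ¬∃ f : ℕ → α, (∀ n, f n ∈ S) ∧ StrictAnti f) :
    PS S = PS ({s ∈ S | ∀ t ∈ S, s ≤ t → s = t} ∪ {s ∈ S | ∀ t ∈ S, t ≤ s → s = t}) := by
  ext ⟨x, y⟩
  constructor
  · rintro ⟨h1, h2⟩
    constructor
    · intro l hl s hsm
      rcases hsm with ⟨hs, _⟩ | ⟨hs, _⟩ <;> exact h1 l hl s hs
    · intro s hsm u hu
      rcases hsm with ⟨hs, _⟩ | ⟨hs, _⟩ <;> exact h2 s hs u hu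
  · rintro ⟨h1, h2⟩
    constructor
    · intro l hl s hs
      obtain ⟨m, hm, hle, hmin⟩ := exists_min_aux S hdcc s hs
      exact le_trans (h1 l hl m (Or.inr ⟨hm, hmin⟩)) hle
    · intro s hs u hu
      obtain ⟨m, hm, hle, hmax⟩ := exists_max_aux S hacc s hs
      exact le_trans hle (h2 m (Or.inl ⟨hm, hmax⟩) u hu)
end

section
/- Let (A,≤) be a poset, a ∈ A, and define f : A → A² by f(x) := (x,a). Then f maps A into P_a(A); the image f(A) is a convex subset of the subposet (P_a(A),⊑); f is an LU-embedding of (A,≤) into (P_a(A),⊑); and f is an order isomorphism from (A,≤) onto (f(A),⊑). -/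
/-- The ⊑-lower bounds of `X` within the subposet `P`. -/
def LBIn {α : Type*} [PartialOrder α] (P X : Set (α × α)) : Set (α × α) :=
  {p ∈ P | ∀ q ∈ X, Tle p q}

/-- The ⊑-upper bounds of `X` within the subposet `P`. -/
def UBIn {α : Type*} [PartialOrder α] (P X : Set (α × α)) : Set (α × α) :=
  {p ∈ P | ∀ q ∈ X, Tle q p}

/-- The map `f(x) = (x,a)` maps `A` into `P_a(A)`, its image is convex in
`(P_a(A),⊑)`, it is an LU-embedding of `A` into `(P_a(A),⊑)`, and it is an
order isomorphism from `A` onto its image. -/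
theorem stmt6 {α : Type*} [PartialOrder α] (a : α) :
    (∀ x : α, (x, a) ∈ PS ({a} : Set α)) ∧
    (∀ b c : α, ∀ q ∈ PS ({a} : Set α),
      Tle (b, a) q → Tle q (c, a) → ∃ x : α, q = (x, a)) ∧
    (∀ x y : α, x ≤ y → Tle (x, a) (y, a)) ∧
    (∀ x y : α, Tle (x, a) (y, a) → x ≤ y) ∧
    (∀ X : Set α, X.Finite → X.Nonempty →
      LBIn (PS {a}) ((fun x => (x, a)) '' X) =
        LBIn (PS {a}) ((fun x => (x, a)) '' upperBounds (lowerBounds X)) ∧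
      UBIn (PS {a}) ((fun x => (x, a)) '' X) =
        UBIn (PS {a}) ((fun x => (x, a)) '' lowerBounds (upperBounds X))) := by
  refine ⟨?_, ?_, ?_, ?_, ?_⟩
  · intro x
    refine ⟨fun l hl y hy => ?_, fun y hy u hu => ?_⟩
    · rw [Set.mem_singleton_iff] at hy; subst hy
      exact hl (Set.mem_insert_iff.2 (Or.inr rfl))
    · rw [Set.mem_singleton_iff] at hy; subst hy
      exact hu (Set.mem_insert_iff.2 (Or.inr rfl))
  · intro b c q _ h1 h2
    refine ⟨q.1, ?_⟩
    have : q.2 = a := le_antisymm h1.2 h2.2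
    exact Prod.ext rfl this
  · exact fun x y h => ⟨h, le_refl a⟩
  · exact fun x y h => h.1
  · intro X _ hne
    constructor
    · ext p
      simp only [LBIn, Set.mem_setOf_eq]
      constructor
      · rintro ⟨hp, h⟩
        refine ⟨hp, ?_⟩
        rintro q ⟨z, hz, rfl⟩
        have h1 : p.1 ∈ lowerBounds X := fun x hx => (h (x, a) ⟨x, hx, rfl⟩).1
        obtain ⟨x0, hx0⟩ := hne
        exact ⟨hz h1, (h (x0, a) ⟨x0, hx0, rfl⟩).2⟩
      · rintro ⟨hp, h⟩
        refine ⟨hp, ?_⟩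
        rintro q ⟨x, hx, rfl⟩
        exact h (x, a) ⟨x, subset_upperBounds_lowerBounds X hx, rfl⟩
    · ext p
      simp only [UBIn, Set.mem_setOf_eq]
      constructor
      · rintro ⟨hp, h⟩
        refine ⟨hp, ?_⟩
        rintro q ⟨z, hz, rfl⟩
        have h1 : p.1 ∈ upperBounds X := fun x hx => (h (x, a) ⟨x, hx, rfl⟩).1
        obtain ⟨x0, hx0⟩ := hne
        exact ⟨hz h1, (h (x0, a) ⟨x0, hx0, rfl⟩).2⟩
      · rintro ⟨hp, h⟩
        refine ⟨hp, ?_⟩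
        rintro q ⟨x, hx, rfl⟩
        exact h (x, a) ⟨x, subset_lowerBounds_upperBounds X hx, rfl⟩
end

section
/- Let (A,≤) be a distributive poset and a,b ∈ A with a ≤ b, and let ' be an orthocomplementation on the interval subposet ([a,b],≤), i.e., an antitone involution on [a,b] such that for every x ∈ [a,b] the set of lower bounds of {x,x'} within [a,b] equals {a} and the set of upper bounds of {x,x'} within [a,b] equals {b}. Assume further that for every x ∈ A satisfying L({a}) ⊊ L(U({x,a}) ∪ {b}) ⊊ L({b}) one has L(U({x,a}) ∪ {b}) = L({x}). Then (A,≤) can be LU-embedded into (P_{{a,b}}(A),⊑), and the poset ([a,b],≤,') is Boolean, i.e., the subposet ([a,b],≤) is distributive and complemented. -/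
namespace Stmt7Aux

variable {α : Type*} [PartialOrder α]

lemma mem_lb_pair {x y w : α} : w ∈ lowerBounds ({x, y} : Set α) ↔ w ≤ x ∧ w ≤ y := by
  constructor
  · intro h
    exact ⟨h (by simp), h (by simp)⟩
  · rintro ⟨h1, h2⟩ u hu
    rcases hu with rfl | hu
    · exact h1
    · rw [Set.mem_singleton_iff] at hu; subst hu; exact h2

lemma mem_ub_pair {x y w : α} : w ∈ upperBounds ({x, y} : Set α) ↔ x ≤ w ∧ y ≤ w := by
  constructor
  · intro h
    exact ⟨h (by simp), h (by simp)⟩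
  · rintro ⟨h1, h2⟩ u hu
    rcases hu with rfl | hu
    · exact h1
    · rw [Set.mem_singleton_iff] at hu; subst hu; exact h2

lemma mem_lb_singleton {x w : α} : w ∈ lowerBounds ({x} : Set α) ↔ w ≤ x := by
  simp [lowerBounds_singleton]

/-- membership in `S x = L(U(x,a) ∪ {b})` -/
lemma memS {x w a b : α} :
    w ∈ lowerBounds (upperBounds ({x, a} : Set α) ∪ {b}) ↔
      (∀ u, x ≤ u → a ≤ u → w ≤ u) ∧ w ≤ b := by
  constructor
  · intro h
    refine ⟨fun u hx ha => h (Or.inl (mem_ub_pair.mpr ⟨hx, ha⟩)), h (Or.inr rfl)⟩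
  · rintro ⟨h1, h2⟩ u hu
    rcases hu with hu | hu
    · rw [mem_ub_pair] at hu; exact h1 u hu.1 hu.2
    · rw [Set.mem_singleton_iff] at hu; subst hu; exact h2

end Stmt7Aux

open Stmt7Aux
/-- A poset is distributive if `L(U(x,y),z) = LU(L(x,z),L(y,z))` for all `x,y,z`. -/
def DistribPoset (α : Type*) [PartialOrder α] : Prop :=
  ∀ x y z : α, lowerBounds (upperBounds {x, y} ∪ {z}) =
    lowerBounds (upperBounds (lowerBounds {x, z} ∪ lowerBounds {y, z}))

/-- Let `A` be a distributive poset, `a ≤ b`, and `'` an orthocomplementation on the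
interval `[a,b]`. If for every `x ∈ A` with `L(a) ⊊ L(U(x,a),b) ⊊ L(b)` one has
`L(U(x,a),b) = L(x)`, then `A` can be LU-embedded into `(P_{{a,b}}(A),⊑)` and
`([a,b],≤,')` is a Boolean poset (distributive and complemented). -/
theorem stmt7 {α : Type*} [PartialOrder α] (hdist : DistribPoset α)
    (a b : α) (hab : a ≤ b)
    (o : ↥(Set.Icc a b) → ↥(Set.Icc a b))
    (hoanti : ∀ x y : ↥(Set.Icc a b), x ≤ y → o y ≤ o x)
    (hoinv : ∀ x : ↥(Set.Icc a b), o (o x) = x)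
    (hortho : ∀ x : ↥(Set.Icc a b),
      lowerBounds {x, o x} = {(⟨a, Set.left_mem_Icc.mpr hab⟩ : ↥(Set.Icc a b))} ∧
      upperBounds {x, o x} = {(⟨b, Set.right_mem_Icc.mpr hab⟩ : ↥(Set.Icc a b))})
    (hcond : ∀ x : α,
      lowerBounds {a} ⊂ lowerBounds (upperBounds {x, a} ∪ {b}) →
      lowerBounds (upperBounds {x, a} ∪ {b}) ⊂ lowerBounds {b} →
      lowerBounds (upperBounds {x, a} ∪ {b}) = lowerBounds {x}) :
    (∃ F : α → α × α,
      (∀ x : α, F x ∈ PS ({a, b} : Set α)) ∧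
      (∀ x y : α, x ≤ y → Tle (F x) (F y)) ∧
      (∀ x y : α, Tle (F x) (F y) → x ≤ y) ∧
      (∀ X : Set α, X.Finite → X.Nonempty →
        LBIn (PS {a, b}) (F '' X) = LBIn (PS {a, b}) (F '' upperBounds (lowerBounds X)) ∧
        UBIn (PS {a, b}) (F '' X) = UBIn (PS {a, b}) (F '' lowerBounds (upperBounds X)))) ∧
    DistribPoset ↥(Set.Icc a b) ∧
    (∀ x : ↥(Set.Icc a b), ∃ y : ↥(Set.Icc a b),
      lowerBounds {x, y} = lowerBounds (Set.univ : Set ↥(Set.Icc a b)) ∧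
      upperBounds {x, y} = upperBounds (Set.univ : Set ↥(Set.Icc a b))) := by
  classical
  have hA0 : a ∈ Set.Icc a b := Set.left_mem_Icc.mpr hab
  have hB0 : b ∈ Set.Icc a b := Set.right_mem_Icc.mpr hab
  have haS : ∀ x : α, a ∈ lowerBounds (upperBounds ({x, a} : Set α) ∪ {b}) :=
    fun x => memS.mpr ⟨fun _ _ ha => ha, hab⟩
  have hselfS : ∀ x : α, x ≤ b → x ∈ lowerBounds (upperBounds ({x, a} : Set α) ∪ {b}) :=
    fun x hxb => memS.mpr ⟨fun _ hx _ => hx, hxb⟩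
  have hSmono : ∀ x y : α, x ≤ y →
      lowerBounds (upperBounds ({x, a} : Set α) ∪ {b}) ⊆
        lowerBounds (upperBounds ({y, a} : Set α) ∪ {b}) := by
    intro x y hxy w hw
    rw [memS] at hw ⊢
    exact ⟨fun u hy ha => hw.1 u (hxy.trans hy) ha, hw.2⟩
  have hLaSub : ∀ z : α, lowerBounds ({a} : Set α) ⊆
      lowerBounds (upperBounds ({z, a} : Set α) ∪ {b}) := by
    intro z w hw
    rw [mem_lb_singleton] at hw
    exact memS.mpr ⟨fun u _ hau => hw.trans hau, hw.trans hab⟩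
  have htri : ∀ z : α,
      lowerBounds (upperBounds ({z, a} : Set α) ∪ {b}) = lowerBounds {a} ∨
      b ∈ lowerBounds (upperBounds ({z, a} : Set α) ∪ {b}) ∨
      ((a ≤ z ∧ z ≤ b) ∧
        lowerBounds (upperBounds ({z, a} : Set α) ∪ {b}) = lowerBounds {z}) := by
    intro z
    by_cases h1 : lowerBounds (upperBounds ({z, a} : Set α) ∪ {b}) = lowerBounds {a}
    · exact Or.inl h1
    by_cases h2 : b ∈ lowerBounds (upperBounds ({z, a} : Set α) ∪ {b})
    · exact Or.inr (Or.inl h2)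
    have hsub2 : lowerBounds (upperBounds ({z, a} : Set α) ∪ {b}) ⊆ lowerBounds ({b} : Set α) := by
      intro w hw; rw [mem_lb_singleton]; exact (memS.mp hw).2
    have heq := hcond z ((hLaSub z).ssubset_of_ne (fun h => h1 h.symm))
      (hsub2.ssubset_of_ne (fun h => h2 (h ▸ mem_lb_singleton.mpr le_rfl)))
    have haz : a ≤ z := by
      have := haS z; rw [heq, mem_lb_singleton] at this; exact this
    have hzb : z ≤ b := by
      have : z ∈ lowerBounds ({z} : Set α) := mem_lb_singleton.mpr le_rfl
      rw [← heq] at this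
      exact (memS.mp this).2
    exact Or.inr (Or.inr ⟨⟨haz, hzb⟩, heq⟩)
  have hbotIcc : ∀ v : ↥(Set.Icc a b), (⟨a, hA0⟩ : ↥(Set.Icc a b)) ≤ v := fun v => v.2.1
  have htopIcc : ∀ v : ↥(Set.Icc a b), v ≤ (⟨b, hB0⟩ : ↥(Set.Icc a b)) := fun v => v.2.2
  -- common lower bounds (in α) of x and o x lie below a
  have hlow : ∀ (x : ↥(Set.Icc a b)) (z : α), z ≤ ↑x → z ≤ ↑(o x) → z ≤ a := by
    intro x z hzx hzo
    have hzb : z ≤ b := hzx.trans x.2.2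
    rcases htri z with h | h | h
    · have hm := hselfS z hzb
      rw [h, mem_lb_singleton] at hm; exact hm
    · have hb := (memS.mp h).1
      have hbx : b ≤ ↑x := hb ↑x hzx x.2.1
      have hbo : b ≤ ↑(o x) := hb ↑(o x) hzo (o x).2.1
      have hx : x = ⟨b, hB0⟩ := Subtype.ext (le_antisymm x.2.2 hbx)
      have hox : o x = ⟨b, hB0⟩ := Subtype.ext (le_antisymm (o x).2.2 hbo)
      have hm : (⟨b, hB0⟩ : ↥(Set.Icc a b)) ∈ lowerBounds ({x, o x} : Set ↥(Set.Icc a b)) :=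
        mem_lb_pair.mpr ⟨hx ▸ le_rfl, hox ▸ le_rfl⟩
      rw [(hortho x).1] at hm
      have hba : b = a := congrArg Subtype.val (Set.mem_singleton_iff.mp hm)
      exact hzb.trans hba.le
    · obtain ⟨⟨haz, hzb'⟩, _⟩ := h
      have hm : (⟨z, Set.mem_Icc.mpr ⟨haz, hzb'⟩⟩ : ↥(Set.Icc a b)) ∈
          lowerBounds ({x, o x} : Set ↥(Set.Icc a b)) :=
        mem_lb_pair.mpr ⟨hzx, hzo⟩
      rw [(hortho x).1] at hm
      exact (congrArg Subtype.val (Set.mem_singleton_iff.mp hm)).le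
  -- common upper bounds (in α) of x and o x lie above b
  have hupp : ∀ (x : ↥(Set.Icc a b)) (z : α), ↑x ≤ z → ↑(o x) ≤ z → b ≤ z := by
    intro x z hxz hoz
    have haz : a ≤ z := x.2.1.trans hxz
    rcases htri z with h | h | h
    · have hmx : (↑x : α) ∈ lowerBounds (upperBounds ({z, a} : Set α) ∪ {b}) :=
        memS.mpr ⟨fun _ hz _ => hxz.trans hz, x.2.2⟩
      have hmo : (↑(o x) : α) ∈ lowerBounds (upperBounds ({z, a} : Set α) ∪ {b}) :=
        memS.mpr ⟨fun _ hz _ => hoz.trans hz, (o x).2.2⟩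
      rw [h, mem_lb_singleton] at hmx hmo
      have hx : x = ⟨a, hA0⟩ := Subtype.ext (le_antisymm hmx x.2.1)
      have hox : o x = ⟨a, hA0⟩ := Subtype.ext (le_antisymm hmo (o x).2.1)
      have hm : (⟨a, hA0⟩ : ↥(Set.Icc a b)) ∈ upperBounds ({x, o x} : Set ↥(Set.Icc a b)) :=
        mem_ub_pair.mpr ⟨hx ▸ le_rfl, hox ▸ le_rfl⟩
      rw [(hortho x).2] at hm
      have hba : a = b := congrArg Subtype.val (Set.mem_singleton_iff.mp hm)
      exact hba ▸ haz
    · exact (memS.mp h).1 z le_rfl haz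
    · obtain ⟨⟨haz', hzb⟩, _⟩ := h
      have hm : (⟨z, Set.mem_Icc.mpr ⟨haz', hzb⟩⟩ : ↥(Set.Icc a b)) ∈
          upperBounds ({x, o x} : Set ↥(Set.Icc a b)) :=
        mem_ub_pair.mpr ⟨hxz, hoz⟩
      rw [(hortho x).2] at hm
      exact (congrArg Subtype.val (Set.mem_singleton_iff.mp hm)).ge
  have hmidIcc : ∀ z : α, lowerBounds (upperBounds ({z, a} : Set α) ∪ {b}) ≠ lowerBounds {a} →
      b ∉ lowerBounds (upperBounds ({z, a} : Set α) ∪ {b}) → z ∈ Set.Icc a b := by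
    intro z h1 h2
    rcases htri z with h | h | h
    · exact absurd h h1
    · exact absurd h h2
    · exact Set.mem_Icc.mpr h.1
  set g : α → α := fun z =>
    if h1 : lowerBounds (upperBounds ({z, a} : Set α) ∪ {b}) = lowerBounds {a} then b
    else if h2 : b ∈ lowerBounds (upperBounds ({z, a} : Set α) ∪ {b}) then a
    else ↑(o ⟨z, hmidIcc z h1 h2⟩) with hgdef
  have hgcases : ∀ z : α,
      (lowerBounds (upperBounds ({z, a} : Set α) ∪ {b}) = lowerBounds {a} ∧ g z = b) ∨
      (lowerBounds (upperBounds ({z, a} : Set α) ∪ {b}) ≠ lowerBounds {a} ∧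
        b ∈ lowerBounds (upperBounds ({z, a} : Set α) ∪ {b}) ∧ g z = a) ∨
      (∃ hz : z ∈ Set.Icc a b,
        lowerBounds (upperBounds ({z, a} : Set α) ∪ {b}) = lowerBounds {z} ∧
        lowerBounds (upperBounds ({z, a} : Set α) ∪ {b}) ≠ lowerBounds {a} ∧
        b ∉ lowerBounds (upperBounds ({z, a} : Set α) ∪ {b}) ∧ g z = ↑(o ⟨z, hz⟩)) := by
    intro z
    by_cases h1 : lowerBounds (upperBounds ({z, a} : Set α) ∪ {b}) = lowerBounds {a}
    · left
      refine ⟨h1, ?_⟩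
      simp only [hgdef]
      rw [dif_pos h1]
    by_cases h2 : b ∈ lowerBounds (upperBounds ({z, a} : Set α) ∪ {b})
    · right; left
      refine ⟨h1, h2, ?_⟩
      simp only [hgdef]
      rw [dif_neg h1, dif_pos h2]
    · right; right
      have heq : lowerBounds (upperBounds ({z, a} : Set α) ∪ {b}) = lowerBounds {z} := by
        rcases htri z with h | h | h
        · exact absurd h h1
        · exact absurd h h2
        · exact h.2
      refine ⟨hmidIcc z h1 h2, heq, h1, h2, ?_⟩
      simp only [hgdef]
      rw [dif_neg h1, dif_neg h2]
  have hga : ∀ z : α, a ≤ g z := by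
    intro z
    rcases hgcases z with ⟨_, h⟩ | ⟨_, _, h⟩ | ⟨hz, _, _, _, h⟩
    · rw [h]; exact hab
    · rw [h]
    · rw [h]; exact (o ⟨z, hz⟩).2.1
  have hgb : ∀ z : α, g z ≤ b := by
    intro z
    rcases hgcases z with ⟨_, h⟩ | ⟨_, _, h⟩ | ⟨hz, _, _, _, h⟩
    · rw [h]
    · rw [h]; exact hab
    · rw [h]; exact (o ⟨z, hz⟩).2.2
  have hmemPS : ∀ x : α, ((x, g x) : α × α) ∈ PS ({a, b} : Set α) := by
    intro x
    constructor
    · intro w hw s hs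
      rw [mem_lb_pair] at hw
      have hwa : w ≤ a := by
        rcases hgcases x with ⟨hS, hgx⟩ | ⟨_, _, hgx⟩ | ⟨hx, _, _, _, hgx⟩
        · have hm : w ∈ lowerBounds (upperBounds ({x, a} : Set α) ∪ {b}) :=
            memS.mpr ⟨fun u hxu _ => hw.1.trans hxu, hgx ▸ hw.2⟩
          rw [hS, mem_lb_singleton] at hm; exact hm
        · exact hgx ▸ hw.2
        · exact hlow ⟨x, hx⟩ w hw.1 (hgx ▸ hw.2)
      rw [Set.mem_insert_iff, Set.mem_singleton_iff] at hs
      rcases hs with rfl | rfl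
      · exact hwa
      · exact hwa.trans hab
    · intro s hs w hw
      rw [mem_ub_pair] at hw
      have hbw : b ≤ w := by
        rcases hgcases x with ⟨_, hgx⟩ | ⟨_, hbS, hgx⟩ | ⟨hx, _, _, _, hgx⟩
        · exact hgx ▸ hw.2
        · exact (memS.mp hbS).1 w hw.1 (hgx ▸ hw.2)
        · exact hupp ⟨x, hx⟩ w hw.1 (hgx ▸ hw.2)
      rw [Set.mem_insert_iff, Set.mem_singleton_iff] at hs
      rcases hs with rfl | rfl
      · exact hab.trans hbw
      · exact hbw
  have hganti : ∀ x y : α, x ≤ y → g y ≤ g x := by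
    intro x y hxy
    rcases hgcases y with ⟨hSy, hgy⟩ | ⟨_, _, hgy⟩ | ⟨hy, _, _, hbSy, hgy⟩
    · have hSx : lowerBounds (upperBounds ({x, a} : Set α) ∪ {b}) = lowerBounds {a} :=
        Set.Subset.antisymm (by rw [← hSy]; exact hSmono x y hxy) (hLaSub x)
      rcases hgcases x with ⟨_, hgx⟩ | ⟨hne, _, _⟩ | ⟨_, _, hne, _, _⟩
      · rw [hgx, hgy]
      · exact absurd hSx hne
      · exact absurd hSx hne
    · rw [hgy]; exact hga x
    · rcases hgcases x with ⟨_, hgx⟩ | ⟨_, hbSx, _⟩ | ⟨hx, _, _, _, hgx⟩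
      · rw [hgx, hgy]; exact (o ⟨y, hy⟩).2.2
      · exact absurd (hSmono x y hxy hbSx) hbSy
      · rw [hgx, hgy]
        exact hoanti ⟨x, hx⟩ ⟨y, hy⟩ hxy
  refine ⟨⟨fun x => (x, g x), hmemPS, ?_, ?_, ?_⟩, ?_, ?_⟩
  · intro x y hxy
    exact ⟨hxy, hganti x y hxy⟩
  · intro x y h
    exact h.1
  · intro X _ hne
    obtain ⟨x0, hx0⟩ := hne
    constructor
    · apply Set.Subset.antisymm
      · rintro p ⟨hp, hpl⟩
        have hp1 : ∀ x ∈ X, p.1 ≤ x ∧ g x ≤ p.2 := fun x hx => hpl (x, g x) ⟨x, hx, rfl⟩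
        have ha2 : a ≤ p.2 := (hga x0).trans (hp1 x0 hx0).2
        refine ⟨hp, ?_⟩
        rintro q ⟨y, hy, rfl⟩
        have hp1y : p.1 ≤ y := hy (fun x hx => (hp1 x hx).1)
        refine ⟨hp1y, ?_⟩
        show g y ≤ p.2
        rcases hgcases y with ⟨hSy, hgy⟩ | ⟨_, _, hgy⟩ | ⟨hyIcc, _, _, _, hgy⟩
        · -- bottom case : g y = b, show b ≤ p.2
          rw [hgy]
          have hb : b ∈ lowerBounds (upperBounds ({p.1, p.2} : Set α) ∪ {b}) := by
            intro u hu
            rcases hu with hu | hu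
            · exact hp.2 b (Or.inr rfl) u hu
            · rw [Set.mem_singleton_iff] at hu; subst hu; exact le_rfl
          rw [hdist p.1 p.2 b] at hb
          apply hb
          intro v hv
          rcases hv with hv | hv
          · rw [mem_lb_pair] at hv
            have hm : v ∈ lowerBounds (upperBounds ({y, a} : Set α) ∪ {b}) :=
              hSmono p.1 y hp1y (memS.mpr ⟨fun u h1 _ => hv.1.trans h1, hv.2⟩)
            rw [hSy, mem_lb_singleton] at hm
            exact hm.trans ha2
          · exact (mem_lb_pair.mp hv).1
        · rw [hgy]; exact ha2
        · -- middle case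
          rw [hgy]
          have hy'b : (↑(o ⟨y, hyIcc⟩) : α) ≤ b := (o ⟨y, hyIcc⟩).2.2
          have hm : (↑(o ⟨y, hyIcc⟩) : α) ∈
              lowerBounds (upperBounds ({p.1, p.2} : Set α) ∪ {(↑(o ⟨y, hyIcc⟩) : α)}) := by
            intro u hu
            rcases hu with hu | hu
            · exact hy'b.trans (hp.2 b (Or.inr rfl) u hu)
            · rw [Set.mem_singleton_iff] at hu; subst hu; exact le_rfl
          rw [hdist p.1 p.2 (↑(o ⟨y, hyIcc⟩) : α)] at hm
          apply hm
          intro v hv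
          rcases hv with hv | hv
          · rw [mem_lb_pair] at hv
            have hva : v ≤ a := hlow ⟨y, hyIcc⟩ v (hv.1.trans hp1y) hv.2
            exact hva.trans ha2
          · exact (mem_lb_pair.mp hv).1
      · rintro p ⟨hp, hpl⟩
        refine ⟨hp, ?_⟩
        rintro q ⟨x, hx, rfl⟩
        exact hpl (x, g x) ⟨x, fun w hw => hw hx, rfl⟩
    · apply Set.Subset.antisymm
      · rintro p ⟨hp, hpl⟩
        have hp1 : ∀ x ∈ X, x ≤ p.1 ∧ p.2 ≤ g x := fun x hx => hpl (x, g x) ⟨x, hx, rfl⟩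
        have hb2 : p.2 ≤ b := (hp1 x0 hx0).2.trans (hgb x0)
        refine ⟨hp, ?_⟩
        rintro q ⟨y, hy, rfl⟩
        have hyp1 : y ≤ p.1 := hy (fun x hx => (hp1 x hx).1)
        refine ⟨hyp1, ?_⟩
        show p.2 ≤ g y
        rcases hgcases y with ⟨_, hgy⟩ | ⟨_, hbSy, hgy⟩ | ⟨hyIcc, _, _, _, hgy⟩
        · rw [hgy]; exact hb2
        · -- top case : g y = a, show p.2 ≤ a
          rw [hgy]
          have hbS1 : b ∈ lowerBounds (upperBounds ({p.1, a} : Set α) ∪ {b}) :=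
            hSmono y p.1 hyp1 hbSy
          have hb1 := (memS.mp hbS1).1
          have hm : p.2 ∈ lowerBounds (upperBounds ({p.1, a} : Set α) ∪ {p.2}) := by
            intro u hu
            rcases hu with hu | hu
            · rw [mem_ub_pair] at hu
              exact hb2.trans (hb1 u hu.1 hu.2)
            · rw [Set.mem_singleton_iff] at hu; subst hu; exact le_rfl
          rw [hdist p.1 a p.2] at hm
          apply hm
          intro v hv
          rcases hv with hv | hv
          · rw [mem_lb_pair] at hv
            exact hp.1 v (mem_lb_pair.mpr hv) a (Or.inl rfl)
          · exact (mem_lb_pair.mp hv).1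
        · -- middle case
          rw [hgy]
          have hm : p.2 ∈ lowerBounds
              (upperBounds ({y, (↑(o ⟨y, hyIcc⟩) : α)} : Set α) ∪ {p.2}) := by
            intro u hu
            rcases hu with hu | hu
            · rw [mem_ub_pair] at hu
              exact hb2.trans (hupp ⟨y, hyIcc⟩ u hu.1 hu.2)
            · rw [Set.mem_singleton_iff] at hu; subst hu; exact le_rfl
          rw [hdist y (↑(o ⟨y, hyIcc⟩) : α) p.2] at hm
          apply hm
          intro v hv
          rcases hv with hv | hv
          · rw [mem_lb_pair] at hv
            have hva : v ≤ a := hp.1 v (mem_lb_pair.mpr ⟨hv.1.trans hyp1, hv.2⟩) a (Or.inl rfl)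
            exact hva.trans (o ⟨y, hyIcc⟩).2.1
          · exact (mem_lb_pair.mp hv).1
      · rintro p ⟨hp, hpl⟩
        refine ⟨hp, ?_⟩
        rintro q ⟨x, hx, rfl⟩
        exact hpl (x, g x) ⟨x, fun u hu => hu hx, rfl⟩
  · -- distributivity of the interval
    have hUproj : ∀ (x y w : ↥(Set.Icc a b)),
        w ∈ lowerBounds (upperBounds ({x, y} : Set ↥(Set.Icc a b))) →
        ∀ u : α, ↑x ≤ u → ↑y ≤ u → (↑w : α) ≤ u := by
      intro x y w hw u hxu hyu
      have hau : a ≤ u := x.2.1.trans hxu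
      rcases htri u with h | h | h
      · have hx : (↑x : α) ≤ a := by
          have hm : (↑x : α) ∈ lowerBounds (upperBounds ({u, a} : Set α) ∪ {b}) :=
            memS.mpr ⟨fun _ htu _ => hxu.trans htu, x.2.2⟩
          rw [h, mem_lb_singleton] at hm; exact hm
        have hy : (↑y : α) ≤ a := by
          have hm : (↑y : α) ∈ lowerBounds (upperBounds ({u, a} : Set α) ∪ {b}) :=
            memS.mpr ⟨fun _ htu _ => hyu.trans htu, y.2.2⟩
          rw [h, mem_lb_singleton] at hm; exact hm
        have hwa : w ≤ (⟨a, hA0⟩ : ↥(Set.Icc a b)) := hw (mem_ub_pair.mpr ⟨hx, hy⟩)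
        exact le_trans hwa hau
      · exact w.2.2.trans ((memS.mp h).1 u le_rfl hau)
      · obtain ⟨⟨hau', hub⟩, _⟩ := h
        have hwu : w ≤ (⟨u, Set.mem_Icc.mpr ⟨hau', hub⟩⟩ : ↥(Set.Icc a b)) :=
          hw (mem_ub_pair.mpr ⟨hxu, hyu⟩)
        exact hwu
    have hLproj : ∀ (x z t : ↥(Set.Icc a b)),
        (∀ v ∈ lowerBounds ({x, z} : Set ↥(Set.Icc a b)), v ≤ t) →
        ∀ v : α, v ≤ ↑x → v ≤ ↑z → v ≤ (↑t : α) := by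
      intro x z t ht v hvx hvz
      have hvb : v ≤ b := hvx.trans x.2.2
      rcases htri v with h | h | h
      · have hva : v ≤ a := by
          have hm := hselfS v hvb; rw [h, mem_lb_singleton] at hm; exact hm
        exact hva.trans t.2.1
      · have hb := (memS.mp h).1
        have hbx : b ≤ ↑x := hb ↑x hvx x.2.1
        have hbz : b ≤ ↑z := hb ↑z hvz z.2.1
        have hbt : (⟨b, hB0⟩ : ↥(Set.Icc a b)) ≤ t :=
          ht _ (mem_lb_pair.mpr ⟨hbx, hbz⟩)
        exact hvb.trans hbt
      · obtain ⟨⟨hav, hvb'⟩, _⟩ := h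
        have hvt : (⟨v, Set.mem_Icc.mpr ⟨hav, hvb'⟩⟩ : ↥(Set.Icc a b)) ≤ t :=
          ht _ (mem_lb_pair.mpr ⟨hvx, hvz⟩)
        exact hvt
    intro x y z
    apply Set.Subset.antisymm
    · intro w hw
      have hwz : w ≤ z := hw (Or.inr rfl)
      have hwU : w ∈ lowerBounds (upperBounds ({x, y} : Set ↥(Set.Icc a b))) :=
        fun u hu => hw (Or.inl hu)
      have hwα : (↑w : α) ∈ lowerBounds (upperBounds ({↑x, ↑y} : Set α) ∪ {(↑z : α)}) := by
        intro u hu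
        rcases hu with hu | hu
        · rw [mem_ub_pair] at hu
          exact hUproj x y w hwU u hu.1 hu.2
        · rw [Set.mem_singleton_iff] at hu; subst hu
          exact hwz
      rw [hdist ↑x ↑y ↑z] at hwα
      intro t ht
      have htα : (↑t : α) ∈ upperBounds
          (lowerBounds ({↑x, ↑z} : Set α) ∪ lowerBounds ({↑y, ↑z} : Set α)) := by
        intro v hv
        rcases hv with hv | hv
        · rw [mem_lb_pair] at hv
          exact hLproj x z t (fun v' hv' => ht (Or.inl hv')) v hv.1 hv.2
        · rw [mem_lb_pair] at hv
          exact hLproj y z t (fun v' hv' => ht (Or.inr hv')) v hv.1 hv.2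
      exact hwα htα
    · intro w hw u hu
      rcases hu with hu | hu
      · rw [mem_ub_pair] at hu
        apply hw
        intro v hv
        rcases hv with hv | hv
        · exact ((mem_lb_pair.mp hv).1).trans hu.1
        · exact ((mem_lb_pair.mp hv).1).trans hu.2
      · rw [Set.mem_singleton_iff] at hu; subst hu
        apply hw
        intro v hv
        rcases hv with hv | hv
        · exact (mem_lb_pair.mp hv).2
        · exact (mem_lb_pair.mp hv).2
  · -- complementation
    intro x
    refine ⟨o x, ?_, ?_⟩
    · rw [(hortho x).1]
      ext w
      simp only [Set.mem_singleton_iff]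
      constructor
      · rintro rfl v _
        exact hbotIcc v
      · intro h
        exact le_antisymm (h (Set.mem_univ _)) (hbotIcc w)
    · rw [(hortho x).2]
      ext w
      simp only [Set.mem_singleton_iff]
      constructor
      · rintro rfl v _
        exact htopIcc v
      · intro h
        exact le_antisymm (htopIcc w) (h (Set.mem_univ _))
end

section
/- Let (A,≤) be a poset, a ∈ A, and A₁,A₂ ⊆ A such that A₁ ∪ A₂ = A, A₁ ∩ A₂ = {a}, and x ≤ y for all x ∈ A₁ and y ∈ A₂ (so A is the ordinal sum of A₁ and A₂ glued at a, which is the top of A₁ and the bottom of A₂). If the subposets (A₁,≤) and (A₂,≤) are both distributive (with lower- and upper-bound sets computed inside A₁ and A₂ respectively), then (A,≤) is a distributive poset. -/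
/-- The lower bounds of `X` computed within the subset `B`. -/
def LIn {α : Type*} [PartialOrder α] (B X : Set α) : Set α := {w ∈ B | ∀ v ∈ X, w ≤ v}

/-- The upper bounds of `X` computed within the subset `B`. -/
def UIn {α : Type*} [PartialOrder α] (B X : Set α) : Set α := {w ∈ B | ∀ v ∈ X, v ≤ w}

/-- The subposet `(B,≤)` is distributive, with bounds computed inside `B`. -/
def DistribOn {α : Type*} [PartialOrder α] (B : Set α) : Prop :=
  ∀ x ∈ B, ∀ y ∈ B, ∀ z ∈ B,
    LIn B (UIn B {x, y} ∪ {z}) = LIn B (UIn B (LIn B {x, z} ∪ LIn B {y, z}))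

/-- Key lemma: if all five points lie in a distributive subposet `B`, then the
nontrivial distributive inequality holds for them. -/
lemma subkey {α : Type*} [PartialOrder α] {B : Set α} (hB : DistribOn B) {x y z w u : α}
    (hx : x ∈ B) (hy : y ∈ B) (hz : z ∈ B) (hw : w ∈ B) (hu : u ∈ B)
    (hwz : w ≤ z) (hU : ∀ v, x ≤ v → y ≤ v → w ≤ v)
    (hu1 : ∀ p, p ≤ x → p ≤ z → p ≤ u) (hu2 : ∀ p, p ≤ y → p ≤ z → p ≤ u) :
    w ≤ u := by
  have key := hB x hx y hy z hz
  have hwmem : w ∈ LIn B (UIn B {x, y} ∪ {z}) := by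
    refine ⟨hw, ?_⟩
    intro v hv
    rcases hv with ⟨hvB, hvub⟩ | hv
    · exact hU v (hvub x (Or.inl rfl)) (hvub y (Or.inr rfl))
    · have : v = z := hv
      rw [this]; exact hwz
  rw [key] at hwmem
  refine hwmem.2 u ⟨hu, ?_⟩
  intro p hp
  rcases hp with ⟨hpB, hpl⟩ | ⟨hpB, hpl⟩
  · exact hu1 p (hpl x (Or.inl rfl)) (hpl z (Or.inr rfl))
  · exact hu2 p (hpl y (Or.inl rfl)) (hpl z (Or.inr rfl))

/-- The ordinal sum of two distributive posets glued at `a`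
(the top of `A₁` and the bottom of `A₂`) is a distributive poset. -/
theorem stmt8 {α : Type*} [PartialOrder α] (a : α) (A1 A2 : Set α)
    (hunion : A1 ∪ A2 = Set.univ) (hinter : A1 ∩ A2 = {a})
    (hle : ∀ x ∈ A1, ∀ y ∈ A2, x ≤ y)
    (h1 : DistribOn A1) (h2 : DistribOn A2) :
    DistribPoset α := by
  have ha : a ∈ A1 ∩ A2 := by rw [hinter]; rfl
  have ha1 : a ∈ A1 := ha.1
  have ha2 : a ∈ A2 := ha.2
  have mem : ∀ p : α, p ∈ A1 ∨ p ∈ A2 := by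
    intro p
    have hp : p ∈ A1 ∪ A2 := by rw [hunion]; trivial
    exact hp
  have down : ∀ p q : α, p ≤ q → q ∈ A1 → p ∈ A1 := by
    intro p q hpq hq
    rcases mem p with h | h
    · exact h
    · have : p = q := le_antisymm hpq (hle q hq p h)
      rw [this]; exact hq
  have up : ∀ p q : α, p ≤ q → p ∈ A2 → q ∈ A2 := by
    intro p q hpq hp
    rcases mem q with h | h
    · have : q = p := le_antisymm (hle q h p hp) hpq
      rw [this]; exact hp
    · exact h
  intro x y z
  apply Set.Subset.antisymm
  · -- hard direction
    intro w hw
    have hz : w ≤ z := hw (Or.inr rfl)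
    have hU : ∀ v, x ≤ v → y ≤ v → w ≤ v := by
      intro v hxv hyv
      refine hw (Or.inl ?_)
      intro p hp
      rcases hp with rfl | hp
      · exact hxv
      · have : p = y := hp
        rw [this]; exact hyv
    intro u hu
    have hu1 : ∀ p, p ≤ x → p ≤ z → p ≤ u := by
      intro p hpx hpz
      refine hu (Or.inl ?_)
      intro q hq
      rcases hq with rfl | hq
      · exact hpx
      · have : q = z := hq
        rw [this]; exact hpz
    have hu2 : ∀ p, p ≤ y → p ≤ z → p ≤ u := by
      intro p hpy hpz
      refine hu (Or.inr ?_)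
      intro q hq
      rcases hq with rfl | hq
      · exact hpy
      · have : q = z := hq
        rw [this]; exact hpz
    rcases mem x with hx1 | hx2 <;> rcases mem y with hy1 | hy2 <;> rcases mem z with hz1 | hz2
    · -- x,y,z ∈ A1
      have hw1 : w ∈ A1 := down w z hz hz1
      rcases mem u with hu1' | hu2'
      · exact subkey h1 hx1 hy1 hz1 hw1 hu1' hz hU hu1 hu2
      · exact hle w hw1 u hu2'
    · -- x,y ∈ A1, z ∈ A2
      exact hU u (hu1 x le_rfl (hle x hx1 z hz2)) (hu2 y le_rfl (hle y hy1 z hz2))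
    · -- x ∈ A1, y ∈ A2, z ∈ A1
      exact hu2 w (hU y (hle x hx1 y hy2) le_rfl) hz
    · -- x ∈ A1, y ∈ A2, z ∈ A2
      exact hu2 w (hU y (hle x hx1 y hy2) le_rfl) hz
    · -- x ∈ A2, y ∈ A1, z ∈ A1
      exact hu1 w (hU x le_rfl (hle y hy1 x hx2)) hz
    · -- x ∈ A2, y ∈ A1, z ∈ A2
      exact hu1 w (hU x le_rfl (hle y hy1 x hx2)) hz
    · -- x,y ∈ A2, z ∈ A1
      exact hz.trans (hu1 z (hle z hz1 x hx2) le_rfl)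
    · -- x,y,z ∈ A2
      have hau : a ≤ u := hu1 a (hle a ha1 x hx2) (hle a ha1 z hz2)
      have huA2 : u ∈ A2 := up a u hau ha2
      rcases mem w with hw1 | hw2
      · exact hle w hw1 u huA2
      · exact subkey h2 hx2 hy2 hz2 hw2 huA2 hz hU hu1 hu2
  · -- easy direction (holds in any poset)
    intro w hw u hu
    rcases hu with hu | hu
    · refine hw ?_
      intro p hp
      rcases hp with hp | hp
      · exact (hp (Or.inl rfl : x ∈ _)).trans (hu (Or.inl rfl))
      · exact (hp (Or.inl rfl : y ∈ _)).trans (hu (Or.inr rfl))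
    · have : u = z := hu
      rw [this]
      refine hw ?_
      intro p hp
      rcases hp with hp | hp
      · exact hp (Or.inr rfl : z ∈ _)
      · exact hp (Or.inr rfl : z ∈ _)
end

section
/- Let (C,≤) be a linear order with least element 0 and greatest element 1, equipped with an antitone involution ', and let a ∈ C satisfy a ≤ a' and: every x ∈ C with a ≤ x ≤ a' satisfies x = a or x = a'. Consider the interval subposet ([a,1],≤) and the subset S := {a,a'} of [a,1]. Then the map g : C → P_S([a,1]) defined by g(x) := (a,x') if x ≤ a and g(x) := (x,a) if a < x is a well-defined bijection; both g and its inverse are order-preserving (with respect to ≤ on C and the twist order ⊑ on P_S([a,1])); and g commutes with the involutions, i.e., g(x') = (g(x))' for all x ∈ C, where (u,v)' := (v,u). In particular, C is a representable Kleene poset. -/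
universe u

/-- The map `g : C → P_{{a,a'}}([a,1])`, `g(x) = (a,x')` if `x ≤ a` and
`g(x) = (x,a)` if `a < x`. -/
def gmap {C : Type u} [LinearOrder C] [OrderTop C] (f : C → C) (a : C) (haf : a ≤ f a)
    (hanti : ∀ x y : C, x ≤ y → f y ≤ f x) :
    C → ↥(Set.Icc a (⊤ : C)) × ↥(Set.Icc a (⊤ : C)) := fun x =>
  if h : x ≤ a then
    (⟨a, Set.mem_Icc.mpr ⟨le_refl a, le_top⟩⟩,
     ⟨f x, Set.mem_Icc.mpr ⟨le_trans haf (hanti x a h), le_top⟩⟩)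
  else
    (⟨x, Set.mem_Icc.mpr ⟨le_of_not_ge h, le_top⟩⟩,
     ⟨a, Set.mem_Icc.mpr ⟨le_refl a, le_top⟩⟩)

/-- The subset `S = {a, a'}` of the interval `[a,1]`. -/
def SI {C : Type u} [LinearOrder C] [OrderTop C] (f : C → C) (a : C) (haf : a ≤ f a) :
    Set ↥(Set.Icc a (⊤ : C)) :=
  {⟨a, Set.mem_Icc.mpr ⟨le_refl a, le_top⟩⟩, ⟨f a, Set.mem_Icc.mpr ⟨haf, le_top⟩⟩}

/-!
Thanks to the gap hypothesis, `a < x` forces `a' ≤ x` and hence `x' ≤ a`, so `g` is the map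
`x ↦ (x ⊔ a, x' ⊔ a)`; in this form it visibly commutes with the involutions. In a chain,
`P_{{a,a'}}([a,1])` consists of the pairs whose minimum is `a` and whose maximum is at least `a'`,
and on it `(u, v) ↦ if u = a then v' else u` inverts `g`. Finally, a monotone injection out of a
chain into the twist order automatically reflects the order.
-/

section PS

variable {α : Type*}

theorem setLE_Iic_iff [PartialOrder α] {m : α} {S : Set α} :
    SetLE (Set.Iic m) S ↔ m ∈ lowerBounds S :=
  ⟨fun h _ hs => h m le_rfl _ hs, fun h _ hx _ hs => le_trans hx (h hs)⟩

theorem setLE_Ici_iff [PartialOrder α] {m : α} {S : Set α} :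
    SetLE S (Set.Ici m) ↔ m ∈ upperBounds S :=
  ⟨fun h _ hs => h _ hs m le_rfl, fun h _ hs _ hx => le_trans (h hs) hx⟩

theorem mem_PS_iff [Lattice α] {S : Set α} {p : α × α} :
    p ∈ PS S ↔ p.1 ⊓ p.2 ∈ lowerBounds S ∧ p.1 ⊔ p.2 ∈ upperBounds S := by
  rw [PS, Set.mem_ofPred_eq, isGLB_pair.lowerBounds_eq, isLUB_pair.upperBounds_eq, setLE_Iic_iff,
    setLE_Ici_iff]

theorem mem_PS_pair_iff [LinearOrder α] {s t : α} (hst : s ≤ t) {p : α × α} :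
    p ∈ PS {s, t} ↔ p.1 ⊓ p.2 ≤ s ∧ t ≤ p.1 ⊔ p.2 := by
  rw [mem_PS_iff, isLeast_pair.lowerBounds_eq, isGreatest_pair.upperBounds_eq, min_eq_left hst,
    max_eq_right hst, Set.mem_Iic, Set.mem_Ici]

theorem Tle.antisymm [PartialOrder α] {p q : α × α} (hpq : Tle p q) (hqp : Tle q p) : p = q :=
  Prod.ext (le_antisymm hpq.1 hqp.1) (le_antisymm hqp.2 hpq.2)

theorem le_iff_tle_of_injective {β : Type*} [LinearOrder β] [PartialOrder α] {g : β → α × α}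
    (hmono : ∀ x y, x ≤ y → Tle (g x) (g y)) (hinj : Function.Injective g) (x y : β) :
    x ≤ y ↔ Tle (g x) (g y) :=
  ⟨hmono x y, fun h => le_of_not_gt fun hyx => hyx.ne (hinj (Tle.antisymm (hmono y x hyx.le) h))⟩

end PS

section Involution

variable {C : Type u} [LinearOrder C] {f : C → C} {a x : C}

theorem apply_le_comm (hanti : ∀ x y : C, x ≤ y → f y ≤ f x) (hinv : ∀ x : C, f (f x) = x)
    {x y : C} : f x ≤ y ↔ f y ≤ x :=
  ⟨fun h => hinv x ▸ hanti _ _ h, fun h => hinv y ▸ hanti _ _ h⟩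

theorem le_apply_of_le (haf : a ≤ f a) (hanti : ∀ x y : C, x ≤ y → f y ≤ f x) (h : x ≤ a) :
    a ≤ f x :=
  haf.trans (hanti x a h)

theorem apply_le_of_lt (hanti : ∀ x y : C, x ≤ y → f y ≤ f x) (hinv : ∀ x : C, f (f x) = x)
    (hgap : ∀ x : C, a ≤ x → x ≤ f a → x = a ∨ x = f a) (h : a < x) : f x ≤ a := by
  refine (apply_le_comm hanti hinv).2 (le_of_not_gt fun hx => ?_)
  rcases hgap x h.le hx.le with rfl | rfl
  exacts [h.false, hx.false]

end Involution

section Gmap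

variable {C : Type u} [LinearOrder C] [OrderTop C] {f : C → C} {a : C} {haf : a ≤ f a}
  {hanti : ∀ x y : C, x ≤ y → f y ≤ f x}

theorem mem_PS_SI_iff {p : ↥(Set.Icc a (⊤ : C)) × ↥(Set.Icc a (⊤ : C))} :
    p ∈ PS (SI f a haf) ↔
      ((p.1 : C) = a ∨ (p.2 : C) = a) ∧ (f a ≤ (p.1 : C) ∨ f a ≤ (p.2 : C)) := by
  rw [SI, mem_PS_pair_iff (show (⟨a, _⟩ : Set.Icc a ⊤) ≤ ⟨f a, _⟩ from haf), inf_le_iff,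
    le_sup_iff]
  simp only [← Subtype.coe_le_coe, LE.le.ge_iff_eq' p.1.2.1, LE.le.ge_iff_eq' p.2.2.1]

theorem coe_gmap_fst (x : C) : ((gmap f a haf hanti x).1 : C) = x ⊔ a := by
  unfold gmap
  split_ifs with h
  · exact (sup_eq_right.2 h).symm
  · exact (sup_eq_left.2 (le_of_not_ge h)).symm

theorem coe_gmap_snd (hinv : ∀ x : C, f (f x) = x)
    (hgap : ∀ x : C, a ≤ x → x ≤ f a → x = a ∨ x = f a) (x : C) :
    ((gmap f a haf hanti x).2 : C) = f x ⊔ a := by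
  unfold gmap
  split_ifs with h
  · exact (sup_eq_left.2 (le_apply_of_le haf hanti h)).symm
  · exact (sup_eq_right.2 (apply_le_of_lt hanti hinv hgap (lt_of_not_ge h))).symm

theorem gmap_apply_eq_swap (hinv : ∀ x : C, f (f x) = x)
    (hgap : ∀ x : C, a ≤ x → x ≤ f a → x = a ∨ x = f a) (x : C) :
    gmap f a haf hanti (f x) = (gmap f a haf hanti x).swap :=
  Prod.ext (Subtype.ext <| by rw [coe_gmap_fst, Prod.fst_swap, coe_gmap_snd hinv hgap])
    (Subtype.ext <| by rw [coe_gmap_snd hinv hgap, hinv, Prod.snd_swap, coe_gmap_fst])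

theorem gmap_mem_PS (hinv : ∀ x : C, f (f x) = x)
    (hgap : ∀ x : C, a ≤ x → x ≤ f a → x = a ∨ x = f a) (x : C) :
    gmap f a haf hanti x ∈ PS (SI f a haf) := by
  rw [mem_PS_SI_iff, coe_gmap_fst, coe_gmap_snd hinv hgap, sup_eq_right, sup_eq_right]
  rcases le_or_gt x a with h | h
  · exact ⟨Or.inl h, Or.inr (le_sup_of_le_left (hanti x a h))⟩
  · exact ⟨Or.inr (apply_le_of_lt hanti hinv hgap h),
      Or.inl (le_sup_of_le_left ((apply_le_comm hanti hinv).1 (apply_le_of_lt hanti hinv hgap h)))⟩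

theorem gmap_tle_gmap (hinv : ∀ x : C, f (f x) = x)
    (hgap : ∀ x : C, a ≤ x → x ≤ f a → x = a ∨ x = f a) {x y : C} (h : x ≤ y) :
    Tle (gmap f a haf hanti x) (gmap f a haf hanti y) := by
  rw [Tle, ← Subtype.coe_le_coe, ← Subtype.coe_le_coe, coe_gmap_fst, coe_gmap_fst,
    coe_gmap_snd hinv hgap, coe_gmap_snd hinv hgap]
  exact ⟨sup_le_sup_right h a, sup_le_sup_right (hanti x y h) a⟩

variable (f a) in
def gmapInv (p : ↥(Set.Icc a (⊤ : C)) × ↥(Set.Icc a (⊤ : C))) : C :=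
  if (p.1 : C) = a then f p.2 else p.1

theorem gmapInv_gmap (hinv : ∀ x : C, f (f x) = x)
    (hgap : ∀ x : C, a ≤ x → x ≤ f a → x = a ∨ x = f a) (x : C) :
    gmapInv f a (gmap f a haf hanti x) = x := by
  rw [gmapInv, coe_gmap_fst, coe_gmap_snd hinv hgap]
  split_ifs with h
  · rw [sup_eq_left.2 (le_apply_of_le haf hanti (sup_eq_right.1 h)), hinv]
  · exact sup_eq_left.2 (le_of_not_ge (mt sup_eq_right.2 h))

theorem gmap_gmapInv (hinv : ∀ x : C, f (f x) = x)
    (hgap : ∀ x : C, a ≤ x → x ≤ f a → x = a ∨ x = f a) {p} (hp : p ∈ PS (SI f a haf)) :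
    gmap f a haf hanti (gmapInv f a p) = p := by
  obtain ⟨hpair, hle⟩ := mem_PS_SI_iff.1 hp
  rw [gmapInv]
  split_ifs with hfst
  · have hfa : f a ≤ p.2 := hle.elim (fun h => haf.antisymm (h.trans_eq hfst) ▸ p.2.2.1) id
    refine Prod.ext (Subtype.ext ?_) (Subtype.ext ?_)
    · rw [coe_gmap_fst, hfst, sup_eq_right, apply_le_comm hanti hinv]
      exact hfa
    · rw [coe_gmap_snd hinv hgap, hinv, sup_eq_left]
      exact p.2.2.1
  · have hsnd : (p.2 : C) = a := hpair.resolve_left hfst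
    have hlt : a < p.1 := lt_of_le_of_ne p.1.2.1 (Ne.symm hfst)
    refine Prod.ext (Subtype.ext ?_) (Subtype.ext ?_)
    · exact (coe_gmap_fst _).trans (sup_eq_left.2 hlt.le)
    · rw [coe_gmap_snd hinv hgap, hsnd, sup_eq_right]
      exact apply_le_of_lt hanti hinv hgap hlt

end Gmap

theorem stmt11_general {C : Type u} [LinearOrder C] [OrderTop C] (f : C → C)
    (hanti : ∀ x y : C, x ≤ y → f y ≤ f x) (hinv : ∀ x : C, f (f x) = x)
    (a : C) (haf : a ≤ f a)
    (hgap : ∀ x : C, a ≤ x → x ≤ f a → x = a ∨ x = f a) :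
    (∀ x : C, gmap f a haf hanti x ∈ PS (SI f a haf)) ∧
    Function.Injective (gmap f a haf hanti) ∧
    (∀ p ∈ PS (SI f a haf), ∃ x : C, gmap f a haf hanti x = p) ∧
    (∀ x y : C, x ≤ y ↔ Tle (gmap f a haf hanti x) (gmap f a haf hanti y)) ∧
    (∀ x : C, gmap f a haf hanti (f x) =
      ((gmap f a haf hanti x).2, (gmap f a haf hanti x).1)) ∧
    (∃ (A : Type u) (instA : PartialOrder A) (S : Set A), S.Nonempty ∧
      ∃ F : A × A → C, Set.BijOn F (@PS A instA S) Set.univ ∧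
        (∀ p ∈ @PS A instA S, ∀ q ∈ @PS A instA S, (@Tle A instA p q ↔ F p ≤ F q)) ∧
        (∀ p ∈ @PS A instA S, F (p.2, p.1) = f (F p))) := by
  have hmem := gmap_mem_PS (haf := haf) (hanti := hanti) hinv hgap
  have hleft := gmapInv_gmap (haf := haf) (hanti := hanti) hinv hgap
  have hright : ∀ p ∈ PS (SI f a haf), gmap f a haf hanti (gmapInv f a p) = p :=
    fun _ => gmap_gmapInv hinv hgap
  have hinj := Function.LeftInverse.injective hleft
  have hsurj : ∀ p ∈ PS (SI f a haf), ∃ x, gmap f a haf hanti x = p :=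
    fun p hp => ⟨_, hright p hp⟩
  have hle := le_iff_tle_of_injective (fun _ _ => gmap_tle_gmap hinv hgap) hinj
  have hswap := gmap_apply_eq_swap (haf := haf) (hanti := hanti) hinv hgap
  refine ⟨hmem, hinj, hsurj, hle, hswap, _, inferInstance, SI f a haf, ⟨_, Or.inl rfl⟩,
    gmapInv f a, Set.InvOn.bijOn ⟨hright, fun x _ => hleft x⟩ (Set.mapsTo_univ _ _)
      fun x _ => hmem x, ?_, ?_⟩
  · intro p hp q hq
    obtain ⟨x, rfl⟩ := hsurj p hp
    obtain ⟨y, rfl⟩ := hsurj q hq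
    rw [hleft, hleft, hle]
  · intro p hp
    obtain ⟨x, rfl⟩ := hsurj p hp
    rw [← Prod.swap, ← hswap, hleft, hleft]

/-- Let `C` be a bounded chain with an antitone involution `'` and `a ∈ C` with
`a ≤ a'` and no element strictly between `a` and `a'`. Then `g` is a well-defined
bijection from `C` onto `P_{{a,a'}}([a,1])`, it and its inverse are order-preserving,
and it commutes with the involutions. In particular, `C` is a representable
(pseudo-)Kleene poset. -/
theorem stmt11 {C : Type u} [LinearOrder C] [OrderBot C] [OrderTop C] (f : C → C)
    (hanti : ∀ x y : C, x ≤ y → f y ≤ f x) (hinv : ∀ x : C, f (f x) = x)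
    (a : C) (haf : a ≤ f a)
    (hgap : ∀ x : C, a ≤ x → x ≤ f a → x = a ∨ x = f a) :
    (∀ x : C, gmap f a haf hanti x ∈ PS (SI f a haf)) ∧
    Function.Injective (gmap f a haf hanti) ∧
    (∀ p ∈ PS (SI f a haf), ∃ x : C, gmap f a haf hanti x = p) ∧
    (∀ x y : C, x ≤ y ↔ Tle (gmap f a haf hanti x) (gmap f a haf hanti y)) ∧
    (∀ x : C, gmap f a haf hanti (f x) =
      ((gmap f a haf hanti x).2, (gmap f a haf hanti x).1)) ∧
    (∃ (A : Type u) (instA : PartialOrder A) (S : Set A), S.Nonempty ∧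
      ∃ F : A × A → C, Set.BijOn F (@PS A instA S) Set.univ ∧
        (∀ p ∈ @PS A instA S, ∀ q ∈ @PS A instA S, (@Tle A instA p q ↔ F p ≤ F q)) ∧
        (∀ p ∈ @PS A instA S, F (p.2, p.1) = f (F p))) :=
  stmt11_general f hanti hinv a haf hgap
end

section
/- Let (A,≤) be a finite poset and S a nonempty subset of A. Then the cardinality of P_S(A) is odd if and only if S has exactly one element. -/
/-- For a finite poset `A` and nonempty `S ⊆ A`, `|P_S(A)|` is odd iff `|S| = 1`. -/
theorem stmt12 {α : Type*} [PartialOrder α] [Fintype α] (S : Set α) (hS : S.Nonempty) :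
    Odd (PS S).ncard ↔ ∃ a : α, S = {a} := by
  classical
  have hfin : (PS S).Finite := Set.toFinite _
  have hdiag : ∀ x : α, (x, x) ∈ PS S ↔ S = {x} := by
    intro x
    constructor
    · rintro ⟨h1, h2⟩
      have hx1 : ∀ s ∈ S, x ≤ s := fun s hs =>
        h1 x (by simp [Set.pair_eq_singleton, lowerBounds_singleton]) s hs
      have hx2 : ∀ s ∈ S, s ≤ x := fun s hs =>
        h2 s hs x (by simp [Set.pair_eq_singleton, upperBounds_singleton])
      ext s
      simp only [Set.mem_singleton_iff]
      constructor
      · intro hs; exact le_antisymm (hx2 s hs) (hx1 s hs)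
      · rintro rfl
        obtain ⟨t, ht⟩ := hS
        have := le_antisymm (hx2 t ht) (hx1 t ht)
        rwa [this] at ht
    · rintro rfl
      constructor
      · intro z hz s hs
        simp only [Set.pair_eq_singleton, lowerBounds_singleton, Set.mem_Iic] at hz
        simp only [Set.mem_singleton_iff] at hs
        exact hs ▸ hz
      · intro s hs u hu
        simp only [Set.pair_eq_singleton, upperBounds_singleton, Set.mem_Ici] at hu
        simp only [Set.mem_singleton_iff] at hs
        exact hs ▸ hu
  have hsymm : ∀ p : α × α, p ∈ PS S → p.swap ∈ PS S := by
    rintro ⟨x, y⟩ h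
    simpa [PS, Set.pair_comm, Set.inter_comm] using h
  set F : Finset (α × α) := hfin.toFinset with hF
  have hncard : (PS S).ncard = F.card := Set.ncard_eq_toFinset_card _ hfin
  set D := F.filter (fun p => p.1 = p.2) with hD
  set N := F.filter (fun p => ¬ p.1 = p.2) with hN
  have hsplit : D.card + N.card = F.card :=
    Finset.card_filter_add_card_filter_not _
  have hNeven : Even N.card := by
    have hsum : ∑ _x ∈ N, (1 : ZMod 2) = 0 := by
      refine Finset.sum_involution (fun p _ => p.swap) ?_ ?_ ?_ ?_
      · intro a ha; decide
      · intro a ha _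
        simp only [hN, hF, Finset.mem_filter] at ha
        intro hcon
        exact ha.2 (by simpa using (congrArg Prod.fst hcon).symm)
      · intro a ha
        simp only [hN, hF, Finset.mem_filter, Set.Finite.mem_toFinset] at ha ⊢
        exact ⟨hsymm a ha.1, fun h => ha.2 (by simpa [Prod.ext_iff] using h.symm)⟩
      · intro a ha; exact Prod.swap_swap a
    have hc : ((N.card : ℕ) : ZMod 2) = 0 := by
      simpa [Finset.sum_const, nsmul_eq_mul] using hsum
    have h2 : (2 : ℕ) ∣ N.card := (ZMod.natCast_eq_zero_iff _ _).mp hc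
    exact even_iff_two_dvd.mpr h2
  have hDcard : Odd D.card ↔ ∃ a : α, S = {a} := by
    constructor
    · intro hodd
      have hne : D.Nonempty := by
        rcases D.eq_empty_or_nonempty with h | h
        · rw [h] at hodd; simp at hodd
        · exact h
      obtain ⟨p, hp⟩ := hne
      simp only [hD, hF, Finset.mem_filter, Set.Finite.mem_toFinset] at hp
      obtain ⟨hpPS, hpeq⟩ := hp
      have hp' : p = (p.1, p.1) := by rw [Prod.ext_iff]; exact ⟨rfl, hpeq.symm⟩
      exact ⟨p.1, (hdiag p.1).mp (hp' ▸ hpPS)⟩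
    · rintro ⟨a, rfl⟩
      have hDeq : D = {(a, a)} := by
        ext p
        simp only [hD, hF, Finset.mem_filter, Set.Finite.mem_toFinset, Finset.mem_singleton]
        constructor
        · rintro ⟨hpPS, hpeq⟩
          have hp' : p = (p.1, p.1) := by rw [Prod.ext_iff]; exact ⟨rfl, hpeq.symm⟩
          have hs : ({a} : Set α) = {p.1} := (hdiag p.1).mp (hp' ▸ hpPS)
          have : a = p.1 := Set.singleton_eq_singleton_iff.mp hs
          rw [hp', ← this]
        · rintro rfl
          exact ⟨(hdiag a).mpr rfl, rfl⟩
      rw [hDeq]; simp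
  rw [hncard, ← hsplit, Nat.odd_add, ← hDcard]
  exact ⟨fun h => h.mpr hNeven, fun h => iff_of_true h hNeven⟩
end

section
/- Let (A,≤) be a poset and a ∈ A, and assume that the subposet (P_a(A),⊑) has no three-element antichain, i.e., there are no three pairwise ⊑-incomparable elements of P_a(A). Then: (1) every element of A is comparable with a; (2) a is join-irreducible: there exist no c,d ∈ A with c ≠ a and d ≠ a such that a is the least upper bound of {c,d}; and (3) a is meet-irreducible: there exist no e,f ∈ A with e ≠ a and f ≠ a such that a is the greatest lower bound of {e,f}. -/
lemma mem_PS_of {α : Type*} [PartialOrder α] (a x y : α)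
    (h1 : ∀ z, z ≤ x → z ≤ y → z ≤ a) (h2 : ∀ z, x ≤ z → y ≤ z → a ≤ z) :
    (x, y) ∈ PS ({a} : Set α) := by
  constructor
  · intro z hz w hw
    rcases hw with rfl
    exact h1 z (hz (by simp)) (hz (by simp [Set.mem_insert_iff]))
  · intro w hw z hz
    rcases hw with rfl
    exact h2 z (hz (by simp)) (hz (by simp [Set.mem_insert_iff]))

/-- If `(P_a(A),⊑)` has no three-element antichain, then `a` is comparable with
every element of `A`, is join-irreducible, and is meet-irreducible. -/
theorem stmt13 {α : Type*} [PartialOrder α] (a : α)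
    (h : ¬∃ p q r : α × α, p ∈ PS ({a} : Set α) ∧ q ∈ PS ({a} : Set α) ∧
      r ∈ PS ({a} : Set α) ∧
      (¬Tle p q ∧ ¬Tle q p) ∧ (¬Tle p r ∧ ¬Tle r p) ∧ (¬Tle q r ∧ ¬Tle r q)) :
    (∀ b : α, a ≤ b ∨ b ≤ a) ∧
    (¬∃ c d : α, c ≠ a ∧ d ≠ a ∧ IsLUB {c, d} a) ∧
    (¬∃ e f : α, e ≠ a ∧ f ≠ a ∧ IsGLB {e, f} a) := by
  have haa : ((a, a)) ∈ PS ({a} : Set α) :=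
    mem_PS_of a a a (fun z hz _ => hz) (fun z hz _ => hz)
  refine ⟨?_, ?_, ?_⟩
  · intro b
    by_contra hb
    push_neg at hb
    obtain ⟨hab, hba⟩ := hb
    apply h
    refine ⟨(a, b), (b, a), (a, a), ?_, ?_, haa, ?_, ?_, ?_⟩
    · exact mem_PS_of a a b (fun z hz _ => hz) (fun z hz _ => hz)
    · exact mem_PS_of a b a (fun z _ hz => hz) (fun z _ hz => hz)
    · exact ⟨fun t => hab t.1, fun t => hba t.1⟩
    · exact ⟨fun t => hab t.2, fun t => hba t.2⟩
    · exact ⟨fun t => hba t.1, fun t => hab t.1⟩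
  · rintro ⟨c, d, hc, hd, hlub⟩
    have hca : c ≤ a := hlub.1 (by simp)
    have hda : d ≤ a := hlub.1 (by simp [Set.mem_insert_iff])
    have hub : ∀ z, c ≤ z → d ≤ z → a ≤ z := fun z h1 h2 =>
      hlub.2 (by rintro w (rfl | rfl) <;> assumption)
    have hcd : ¬ c ≤ d := fun t => hd (le_antisymm hda (hub d t le_rfl))
    have hdc : ¬ d ≤ c := fun t => hc (le_antisymm hca (hub c le_rfl t))
    have had : ¬ a ≤ d := fun t => hd (le_antisymm hda t)
    have hac : ¬ a ≤ c := fun t => hc (le_antisymm hca t)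
    apply h
    refine ⟨(c, d), (d, c), (a, a), ?_, ?_, haa, ?_, ?_, ?_⟩
    · exact mem_PS_of a c d (fun z hz _ => hz.trans hca) hub
    · exact mem_PS_of a d c (fun z hz _ => hz.trans hda) (fun z h1 h2 => hub z h2 h1)
    · exact ⟨fun t => hcd t.1, fun t => hdc t.1⟩
    · exact ⟨fun t => had t.2, fun t => hac t.1⟩
    · exact ⟨fun t => hac t.2, fun t => had t.1⟩
  · rintro ⟨e, f, he, hf, hglb⟩
    have hae : a ≤ e := hglb.1 (by simp)
    have haf : a ≤ f := hglb.1 (by simp [Set.mem_insert_iff])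
    have hlb : ∀ z, z ≤ e → z ≤ f → z ≤ a := fun z h1 h2 =>
      hglb.2 (by rintro w (rfl | rfl) <;> assumption)
    have hef : ¬ e ≤ f := fun t => he (le_antisymm (hlb e le_rfl t) hae)
    have hfe : ¬ f ≤ e := fun t => hf (le_antisymm (hlb f t le_rfl) haf)
    have hea : ¬ e ≤ a := fun t => he (le_antisymm t hae)
    have hfa : ¬ f ≤ a := fun t => hf (le_antisymm t haf)
    apply h
    refine ⟨(e, f), (f, e), (a, a), ?_, ?_, haa, ?_, ?_, ?_⟩
    · exact mem_PS_of a e f hlb (fun z h1 _ => hae.trans h1)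
    · exact mem_PS_of a f e (fun z h1 h2 => hlb z h2 h1) (fun z h1 _ => haf.trans h1)
    · exact ⟨fun t => hef t.1, fun t => hfe t.1⟩
    · exact ⟨fun t => hea t.1, fun t => hfa t.2⟩
    · exact ⟨fun t => hfa t.1, fun t => hea t.2⟩
end

section
/- Let (K,≤,') be a finite pseudo-Kleene poset. Then the antitone involution ' has at most one fixed point, and ' has a fixed point if and only if the cardinality of K is odd. -/
/-- In a finite pseudo-Kleene poset, the antitone involution has at most one fixed
point, and it has a fixed point iff the cardinality is odd. -/
theorem stmt14 {K : Type*} [PartialOrder K] [Fintype K] (f : K → K)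
    (hanti : ∀ x y : K, x ≤ y → f y ≤ f x) (hinv : ∀ x : K, f (f x) = x)
    (hnorm : ∀ x y : K, SetLE (lowerBounds {x, f x}) (upperBounds {y, f y})) :
    (∀ x y : K, f x = x → f y = y → x = y) ∧
    ((∃ x : K, f x = x) ↔ Odd (Fintype.card K)) := by
  classical
  have hlb : ∀ x : K, f x = x → x ∈ lowerBounds {x, f x} := by
    intro x hx z hz
    simp only [Set.mem_insert_iff, Set.mem_singleton_iff] at hz
    rcases hz with rfl | rfl
    · exact le_refl z
    · rw [hx]
  have hub : ∀ x : K, f x = x → x ∈ upperBounds {x, f x} := by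
    intro x hx z hz
    simp only [Set.mem_insert_iff, Set.mem_singleton_iff] at hz
    rcases hz with rfl | rfl
    · exact le_refl z
    · rw [hx]
  have huniq : ∀ x y : K, f x = x → f y = y → x = y := by
    intro x y hx hy
    exact le_antisymm (hnorm x y x (hlb x hx) y (hub y hy))
      (hnorm y x y (hlb y hy) x (hub x hx))
  refine ⟨huniq, ?_⟩
  have : Fact (Nat.Prime 2) := ⟨Nat.prime_two⟩
  let F : Function.End K := f
  have hpow : F ^ 2 ^ 1 = 1 := by
    have h2 : F ^ 2 ^ 1 = F * F := by rw [pow_one, sq]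
    rw [h2, Function.End.mul_def, Function.End.one_def]
    funext x
    exact hinv x
  have hmod := Equiv.Perm.card_fixedPoints_modEq (p := 2) (n := 1) hpow
  have hset : Function.fixedPoints F = {x : K | f x = x} := rfl
  have key : (∃ x : K, f x = x) ↔
      Odd (Fintype.card (Function.fixedPoints F)) := by
    constructor
    · rintro ⟨x, hx⟩
      have h1 : Fintype.card (Function.fixedPoints F) = 1 :=
        Fintype.card_eq_one_iff.mpr ⟨⟨x, hx⟩, fun z =>
          Subtype.ext (huniq z.1 x z.2 hx)⟩
      rw [h1]
      exact odd_one
    · intro h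
      have hpos : 0 < Fintype.card (Function.fixedPoints F) :=
        h.pos
      obtain ⟨⟨x, hx⟩⟩ := Fintype.card_pos_iff.mp hpos
      exact ⟨x, hx⟩
  rw [key, Nat.odd_iff, Nat.odd_iff, hmod]
end

section
/- Let (K,≤,') be a finite representable Kleene poset whose cardinality is odd. Then ' has exactly one fixed point a ∈ K, and there exists a subset A ⊆ K with a ∈ A and 2·|A| ≤ |K| + 1 such that P_a(A), computed within the subposet (A,≤) of K, is isomorphic to (K,≤,'): there is a bijection from P_a(A) to K which together with its inverse is order-preserving (with respect to the twist order ⊑ on P_a(A) and ≤ on K) and which maps (y,x) to the '-image of the image of (x,y). -/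
universe u

/-- A poset `K` with involution `invo` is representable if there are a poset `A` and a
nonempty `S ⊆ A` and a bijection from `P_S(A)` onto `K` which together with its inverse
is order-preserving and which commutes with the involutions. -/
def IsRepresentable {K : Type u} [PartialOrder K] (invo : K → K) : Prop :=
  ∃ (A : Type u) (instA : PartialOrder A) (S : Set A), S.Nonempty ∧
    ∃ F : A × A → K, Set.BijOn F (@PS A instA S) Set.univ ∧
      (∀ p ∈ @PS A instA S, ∀ q ∈ @PS A instA S, (@Tle A instA p q ↔ F p ≤ F q)) ∧
      (∀ p ∈ @PS A instA S, F (p.2, p.1) = invo (F p))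

/-!
An involution of a finite set of odd size has a fixed point, and normality makes it unique:
for fixed points `a, b` it gives `a ≤ b` and `b ≤ a`. In a representation `G : P_S(B) ≅ K` the
fixed point `a` is the image of a swap-invariant pair `(c, c)`, which forces `S = {c}`. Then every
`(x, c)` lies in `P_c(B)`, so `x ↦ G (x, c)` is an order embedding of `B` into `K`; transporting `G`
along `B ≅ A` onto its image `A` gives `P_a(A) ≅ K`. Since `'` sends `G (x, c)` to `G (c, x)`, the
sets `A` and `A'` meet only in `a`, whence `2 |A| ≤ |K| + 1`.
-/

lemma Function.Involutive.exists_fixed_of_odd_card {X : Type*} [Fintype X] {f : X → X}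
    (hf : Function.Involutive f) (hodd : Odd (Fintype.card X)) : ∃ a, f a = a := by
  have : Fact (Nat.Prime 2) := ⟨Nat.prime_two⟩
  exact Equiv.Perm.exists_fixed_point_of_prime (n := 1) hodd.not_two_dvd_nat
    (σ := hf.toPerm f) (by ext x; simp [sq, hf x])

lemma two_mul_ncard_le_of_inter_image_subset {X : Type*} [Fintype X] {f : X → X}
    (hf : Function.Injective f) {A : Set X} {a : X} (h : A ∩ f '' A ⊆ {a}) :
    2 * A.ncard ≤ Fintype.card X + 1 := by
  have hunion := Set.ncard_union_add_ncard_inter A (f '' A)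
  have hle := Set.ncard_le_card (A ∪ f '' A)
  have hinter := Set.ncard_le_ncard h
  rw [Set.ncard_image_of_injective A hf] at hunion
  rw [Nat.card_eq_fintype_card] at hle
  rw [Set.ncard_singleton] at hinter
  omega

variable {α β K : Type*} [PartialOrder α] [PartialOrder β] [PartialOrder K]

/-- `F` is an isomorphism of `P_S(α)`, with the twist order and the involution `(x, y) ↦ (y, x)`,
onto `(K, ≤, invo)`. -/
def IsTwistIso (S : Set α) (F : α × α → K) (invo : K → K) : Prop :=
  Set.BijOn F (PS S) Set.univ ∧ (∀ p ∈ PS S, ∀ q ∈ PS S, (Tle p q ↔ F p ≤ F q)) ∧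
    ∀ p ∈ PS S, F (p.2, p.1) = invo (F p)

lemma swap_mem_PS {S : Set α} {p : α × α} (h : p ∈ PS S) : p.swap ∈ PS S := by
  change SetLE (lowerBounds {p.2, p.1}) S ∧ SetLE S (upperBounds {p.2, p.1})
  rw [Set.pair_comm]
  exact h

lemma mk_mem_PS_singleton (x s : α) : (x, s) ∈ PS {s} :=
  ⟨fun _ ht _ hs => hs ▸ ht (by simp), fun _ hs _ ht => hs ▸ ht (by simp)⟩

lemma eq_singleton_of_diag_mem_PS {S : Set α} (hS : S.Nonempty) {c : α} (hc : (c, c) ∈ PS S) :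
    S = {c} := by
  have hlow : c ∈ lowerBounds {c, c} := by simp
  have hup : c ∈ upperBounds {c, c} := by simp
  exact hS.subset_singleton_iff.mp fun s hs => le_antisymm (hc.2 s hs c hup) (hc.1 c hlow s hs)

lemma SetLE.image_orderIso_iff (e : α ≃o β) {B C : Set α} :
    SetLE (e '' B) (e '' C) ↔ SetLE B C := by
  simp only [SetLE, Set.forall_mem_image, e.le_iff_le]

lemma OrderIso.map_mem_PS_iff (e : α ≃o β) {S : Set α} {p : α × α} :
    Prod.map e e p ∈ PS (e '' S) ↔ p ∈ PS S := by
  change SetLE (lowerBounds {e p.1, e p.2}) (e '' S) ∧ SetLE (e '' S) (upperBounds {e p.1, e p.2})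
    ↔ p ∈ PS S
  rw [← Set.image_pair, e.lowerBounds_image, e.upperBounds_image, SetLE.image_orderIso_iff,
    SetLE.image_orderIso_iff]
  rfl

lemma OrderIso.tle_map_iff (e : α ≃o β) {p q : α × α} :
    Tle (Prod.map e e p) (Prod.map e e q) ↔ Tle p q := by
  simp only [Tle, Prod.map_fst, Prod.map_snd, e.le_iff_le]

namespace IsTwistIso

variable {S : Set α} {G : α × α → K} {invo : K → K}

lemma comp_orderIso (h : IsTwistIso S G invo) (e : β ≃o α) {T : Set β} (hT : e '' T = S) :
    IsTwistIso T (G ∘ Prod.map e e) invo := by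
  subst hT
  refine ⟨?_, fun p hp q hq => ?_, fun p hp => h.2.2 _ (e.map_mem_PS_iff.mpr hp)⟩
  · exact h.1.comp ((e.toEquiv.prodCongr e.toEquiv).bijOn fun _ => e.map_mem_PS_iff)
  · rw [← e.tle_map_iff]
    exact h.2.1 _ (e.map_mem_PS_iff.mpr hp) _ (e.map_mem_PS_iff.mpr hq)

lemma exists_diag_eq_of_fixed (h : IsTwistIso S G invo) {a : K} (ha : invo a = a) :
    ∃ c, (c, c) ∈ PS S ∧ G (c, c) = a := by
  obtain ⟨p, hp, rfl⟩ := h.1.2.2 (Set.mem_univ a)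
  have hswap : p.swap = p := h.1.2.1 (swap_mem_PS hp) hp ((h.2.2 p hp).trans ha)
  have hdiag : (p.1, p.1) = p := Prod.ext rfl (congrArg Prod.fst hswap).symm
  exact ⟨p.1, hdiag ▸ hp, congrArg G hdiag⟩

variable {c : α}

def fstEmbedding (h : IsTwistIso {c} G invo) : α ↪o K :=
  OrderEmbedding.ofMapLEIff (fun x => G (x, c)) fun x y => by
    rw [← h.2.1 _ (mk_mem_PS_singleton x c) _ (mk_mem_PS_singleton y c)]
    exact ⟨And.left, fun hxy => ⟨hxy, le_rfl⟩⟩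

lemma range_inter_image_subset (h : IsTwistIso {c} G invo) :
    Set.range h.fstEmbedding ∩ invo '' Set.range h.fstEmbedding ⊆ {G (c, c)} := by
  rintro _ ⟨⟨x, rfl⟩, _, ⟨y, rfl⟩, hxy⟩
  have hyc : invo (G (y, c)) = G (c, y) := (h.2.2 _ (mk_mem_PS_singleton y c)).symm
  have hxc := h.1.2.1 (mk_mem_PS_singleton x c) (swap_mem_PS (mk_mem_PS_singleton y c))
    (hxy.symm.trans hyc : G (x, c) = G (c, y))
  exact congrArg (fun x => G (x, c)) (congrArg Prod.fst hxc)

end IsTwistIso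

lemma eq_of_fixed_of_normal {invo : K → K}
    (hnorm : ∀ x y : K, SetLE (lowerBounds {x, invo x}) (upperBounds {y, invo y}))
    {a b : K} (ha : invo a = a) (hb : invo b = b) : a = b :=
  le_antisymm (hnorm a b a (by simp [ha]) b (by simp [hb]))
    (hnorm b a b (by simp [hb]) a (by simp [ha]))

theorem stmt17_general {K : Type u} [PartialOrder K] [Fintype K] (invo : K → K)
    (hinv : ∀ x : K, invo (invo x) = x)
    (hnorm : ∀ x y : K, SetLE (lowerBounds {x, invo x}) (upperBounds {y, invo y}))
    (hrep : IsRepresentable invo)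
    (hodd : Odd (Fintype.card K)) :
    ∃ a : K, invo a = a ∧ (∀ b : K, invo b = b → b = a) ∧
      ∃ (A : Set K) (haA : a ∈ A), 2 * A.ncard ≤ Fintype.card K + 1 ∧
        ∃ F : ↥A × ↥A → K,
          Set.BijOn F (PS ({⟨a, haA⟩} : Set ↥A)) Set.univ ∧
          (∀ p ∈ PS ({⟨a, haA⟩} : Set ↥A), ∀ q ∈ PS ({⟨a, haA⟩} : Set ↥A),
            (Tle p q ↔ F p ≤ F q)) ∧
          (∀ p ∈ PS ({⟨a, haA⟩} : Set ↥A), F (p.2, p.1) = invo (F p)) := by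
  obtain ⟨a, ha⟩ := Function.Involutive.exists_fixed_of_odd_card hinv hodd
  refine ⟨a, ha, fun b hb => eq_of_fixed_of_normal hnorm hb ha, ?_⟩
  obtain ⟨B, _, S, hSne, G, hG⟩ := hrep
  replace hG : IsTwistIso S G invo := hG
  obtain ⟨c, hc, rfl⟩ := hG.exists_diag_eq_of_fixed ha
  obtain rfl := eq_singleton_of_diag_mem_PS hSne hc
  let e := hG.fstEmbedding.orderIso
  have haA : G (c, c) ∈ Set.range hG.fstEmbedding := ⟨c, rfl⟩
  have hec : e.symm ⟨G (c, c), haA⟩ = c := e.symm_apply_eq.mpr rfl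
  have hcard := two_mul_ncard_le_of_inter_image_subset (Function.Involutive.injective hinv)
    hG.range_inter_image_subset
  exact ⟨_, haA, hcard, _, hG.comp_orderIso e.symm (by rw [Set.image_singleton, hec])⟩

/-- A finite representable Kleene poset `K` of odd cardinality: the involution has
exactly one fixed point `a`, and there is a subset `A ⊆ K` containing `a` with
`|A| < |K|/2 + 1` such that `P_a(A)`, computed within the subposet `A`, is
isomorphic to `K`. -/
theorem stmt17 {K : Type u} [PartialOrder K] [Fintype K] (invo : K → K)
    (hanti : ∀ x y : K, x ≤ y → invo y ≤ invo x) (hinv : ∀ x : K, invo (invo x) = x)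
    (hnorm : ∀ x y : K, SetLE (lowerBounds {x, invo x}) (upperBounds {y, invo y}))
    (hdist : DistribPoset K)
    (hrep : IsRepresentable invo)
    (hodd : Odd (Fintype.card K)) :
    ∃ a : K, invo a = a ∧ (∀ b : K, invo b = b → b = a) ∧
      ∃ (A : Set K) (haA : a ∈ A), 2 * A.ncard ≤ Fintype.card K + 1 ∧
        ∃ F : ↥A × ↥A → K,
          Set.BijOn F (PS ({⟨a, haA⟩} : Set ↥A)) Set.univ ∧
          (∀ p ∈ PS ({⟨a, haA⟩} : Set ↥A), ∀ q ∈ PS ({⟨a, haA⟩} : Set ↥A),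
            (Tle p q ↔ F p ≤ F q)) ∧
          (∀ p ∈ PS ({⟨a, haA⟩} : Set ↥A), F (p.2, p.1) = invo (F p)) :=
  stmt17_general invo hinv hnorm hrep hodd
end

section
/- Let (A,≤,') be a Kleene poset. Define G(A) := { ⋂_{i=1}^n L(U(A_i)) : n ≥ 1 and A₁,…,A_n are finite nonempty subsets of A }, and for C ⊆ A put C' := {c' : c ∈ C} and C^⊥ := L(C') = {a ∈ A : a ≤ c' for all c ∈ C}. Then for all C,D ∈ G(A) one has C ∩ C^⊥ ⊆ L(U(D ∪ D^⊥)). -/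
/-- `GA α` is the set of finite intersections `⋂ᵢ L(U(Aᵢ))` where the `Aᵢ` are
finite nonempty subsets of `α`. -/
def GA (α : Type*) [PartialOrder α] : Set (Set α) :=
  {C | ∃ (n : ℕ) (F : Fin (n + 1) → Set α),
    (∀ i, (F i).Finite) ∧ (∀ i, (F i).Nonempty) ∧
    C = ⋂ i, lowerBounds (upperBounds (F i))}

/-- For a Kleene poset `(A,≤,')` and `C, D ∈ G(A)`, one has
`C ∩ C^⊥ ⊆ L(U(D ∪ D^⊥))`, where `C^⊥ = L(C')`. -/
theorem stmt18 {α : Type*} [PartialOrder α] (f : α → α)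
    (hanti : ∀ x y : α, x ≤ y → f y ≤ f x) (hinv : ∀ x : α, f (f x) = x)
    (hnorm : ∀ x y : α, SetLE (lowerBounds {x, f x}) (upperBounds {y, f y}))
    (hdist : DistribPoset α) :
    ∀ C ∈ GA α, ∀ D ∈ GA α,
      C ∩ lowerBounds (f '' C) ⊆ lowerBounds (upperBounds (D ∪ lowerBounds (f '' D))) := by
  rintro C ⟨n, F, hFfin, hFne, rfl⟩ D ⟨m, G, hGfin, hGne, rfl⟩ a ⟨haC, haL⟩ b hb
  -- `a ≤ f a`
  have hafa : a ≤ f a := haL (Set.mem_image_of_mem f haC)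
  -- `f b ∈ D`
  have hfbD : f b ∈ ⋂ i, lowerBounds (upperBounds (G i)) := by
    refine Set.mem_iInter.2 fun i u hu => ?_
    have hfu : f u ≤ b := by
      refine hb (Set.mem_union_right _ ?_)
      rintro _ ⟨d, hd, rfl⟩
      exact hanti _ _ ((Set.mem_iInter.1 hd i) hu)
    calc f b ≤ f (f u) := hanti _ _ hfu
      _ = u := hinv u
  have hfb : f b ≤ b := hb (Set.mem_union_left _ hfbD)
  have ha : a ∈ lowerBounds {a, f a} := by
    intro s hs
    rcases hs with rfl | hs
    · exact le_rfl
    · rw [Set.mem_singleton_iff] at hs; rw [hs]; exact hafa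
  have hbmem : b ∈ upperBounds {b, f b} := by
    intro s hs
    rcases hs with rfl | hs
    · exact le_rfl
    · rw [Set.mem_singleton_iff] at hs; rw [hs]; exact hfb
  exact hnorm a b a ha b hbmem
end

section
/- Let (K,∨,∧,') be a Kleene lattice, i.e., a distributive lattice with an antitone involution ' satisfying x ∧ x' ≤ y ∨ y' for all x,y ∈ K. Let X ⊆ K be involution-closed (x' ∈ X for all x ∈ X) and doubly dense in K: for every a ∈ K, a is the least upper bound of {x ∈ X : x ≤ a} and the greatest lower bound of {x ∈ X : a ≤ x}. Then X, with the induced order and the restriction of ', is a Kleene poset: the subposet (X,≤) is distributive (with lower- and upper-bound sets computed inside X), the restriction of ' is an antitone involution on X, and the normality condition holds within X, i.e., every element of X below both x and x' is below every element of X above both y and y', for all x,y ∈ X. -/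
section Aux
variable {K : Type*} [DistribLattice K] {X : Set K}

lemma aux_le_char (hdd : ∀ a : K, IsLUB {x ∈ X | x ≤ a} a ∧ IsGLB {x ∈ X | a ≤ x} a)
    (a w : K) : (∀ v ∈ X, a ≤ v → w ≤ v) ↔ w ≤ a := by
  constructor
  · intro h
    exact (hdd a).2.2 fun v hv => h v hv.1 hv.2
  · intro h v hv hav
    exact h.trans hav

lemma aux_ge_char (hdd : ∀ a : K, IsLUB {x ∈ X | x ≤ a} a ∧ IsGLB {x ∈ X | a ≤ x} a)
    (a v : K) : (∀ u ∈ X, u ≤ a → u ≤ v) ↔ a ≤ v := by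
  constructor
  · intro h
    exact (hdd a).1.2 fun u hu => h u hu.1 hu.2
  · intro h u hu hua
    exact hua.trans h

end Aux

/-- An involution-closed, doubly dense subset `X` of a Kleene lattice `K` is,
with the induced order and the restriction of `'`, a Kleene poset: `(X,≤)` is
distributive, the restriction of `'` is an antitone involution on `X`, and the
normality condition holds within `X`. -/
theorem stmt19 {K : Type*} [DistribLattice K] (f : K → K)
    (hanti : ∀ x y : K, x ≤ y → f y ≤ f x) (hinv : ∀ x : K, f (f x) = x)
    (hkl : ∀ x y : K, x ⊓ f x ≤ y ⊔ f y)
    (X : Set K) (hXinv : ∀ x ∈ X, f x ∈ X)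
    (hdd : ∀ a : K, IsLUB {x ∈ X | x ≤ a} a ∧ IsGLB {x ∈ X | a ≤ x} a) :
    DistribOn X ∧
    (∀ x ∈ X, f x ∈ X) ∧
    (∀ x ∈ X, ∀ y ∈ X, x ≤ y → f y ≤ f x) ∧
    (∀ x ∈ X, f (f x) = x) ∧
    (∀ x ∈ X, ∀ y ∈ X, ∀ u ∈ X, ∀ v ∈ X,
      u ≤ x → u ≤ f x → y ≤ v → f y ≤ v → u ≤ v) := by
  refine ⟨?_, hXinv, fun x _ y _ h => hanti x y h, fun x _ => hinv x,
    fun x _ y _ u _ v _ hux hufx hyv hfyv => ?_⟩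
  · -- distributivity
    intro x hx y hy z hz
    ext w
    have hU1 : ∀ v, v ∈ UIn X ({x, y} : Set K) ↔ v ∈ X ∧ x ⊔ y ≤ v := by
      intro v
      simp only [UIn, Set.mem_setOf_eq, Set.mem_insert_iff, Set.mem_singleton_iff,
        sup_le_iff]
      constructor
      · rintro ⟨hv, h⟩
        exact ⟨hv, h x (Or.inl rfl), h y (Or.inr rfl)⟩
      · rintro ⟨hv, h1, h2⟩
        exact ⟨hv, by rintro u (rfl | rfl) <;> assumption⟩
    have hL : ∀ a : K, ∀ u, u ∈ LIn X ({a, z} : Set K) ↔ u ∈ X ∧ u ≤ a ⊓ z := by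
      intro a u
      simp only [LIn, Set.mem_setOf_eq, Set.mem_insert_iff, Set.mem_singleton_iff,
        le_inf_iff]
      constructor
      · rintro ⟨hu, h⟩
        exact ⟨hu, h a (Or.inl rfl), h z (Or.inr rfl)⟩
      · rintro ⟨hu, h1, h2⟩
        exact ⟨hu, by rintro v (rfl | rfl) <;> assumption⟩
    constructor
    · rintro ⟨hw, h⟩
      have hwz : w ≤ z := h z (Or.inr rfl)
      have hwxy : w ≤ x ⊔ y := by
        rw [← aux_le_char hdd]
        intro v hv hav
        exact h v (Or.inl ((hU1 v).2 ⟨hv, hav⟩))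
      refine ⟨hw, ?_⟩
      intro v hv
      simp only [UIn, Set.mem_setOf_eq] at hv
      obtain ⟨hvX, hvb⟩ := hv
      have h1 : x ⊓ z ≤ v := by
        rw [← aux_ge_char hdd]
        intro u hu hua
        exact hvb u (Or.inl ((hL x u).2 ⟨hu, hua⟩))
      have h2 : y ⊓ z ≤ v := by
        rw [← aux_ge_char hdd]
        intro u hu hua
        exact hvb u (Or.inr ((hL y u).2 ⟨hu, hua⟩))
      calc w ≤ (x ⊔ y) ⊓ z := le_inf hwxy hwz
        _ = x ⊓ z ⊔ y ⊓ z := inf_sup_right x y z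
        _ ≤ v := sup_le h1 h2
    · rintro ⟨hw, h⟩
      have hwkey : w ≤ x ⊓ z ⊔ y ⊓ z := by
        rw [← aux_le_char hdd]
        intro v hv hav
        refine h v ?_
        simp only [UIn, Set.mem_setOf_eq]
        refine ⟨hv, ?_⟩
        rintro u (hu | hu)
        · exact ((hL x u).1 hu).2.trans ((le_sup_left).trans hav)
        · exact ((hL y u).1 hu).2.trans ((le_sup_right).trans hav)
      have hw' : w ≤ (x ⊔ y) ⊓ z := by
        rwa [inf_sup_right]
      refine ⟨hw, ?_⟩
      rintro v (hv | rfl)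
      · exact (hw'.trans inf_le_left).trans ((hU1 v).1 hv).2
      · exact hw'.trans inf_le_right
  · -- normality
    exact le_trans (le_inf hux hufx) ((hkl x y).trans (sup_le hyv hfyv))
end
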